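/- arXiv:2301.02746 — 8 statements merged into one kernel-verified Lean document; each statement's English description precedes it below -/
import Mathlib

section
/- Let S be a free open set in g matrix variables and let f be a free analytic function on S. Then f respects intertwinings: whenever X ∈ S[n], Y ∈ S[m], and Γ is an m×n complex matrix satisfying Γ X_j = Y_j Γ for j = 1,…,g, one has Γ f[n](X) = f[m](Y) Γ. -/
open scoped ComplexOrder Kronecker Matrix Matrix.Norms.L2Operator

noncomputable section

/-- Square complex matrices of size `n`. -/
abbrev Mat (n : ℕ) : Type := Matrix (Fin n) (Fin n) ℂ

/-- Assemble a `k × k` array of matrices into a single block matrix. -/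
def blockMat {k : ℕ} {α β : Type*} (M : Fin k → Fin k → Matrix α β ℂ) :
    Matrix (Fin k × α) (Fin k × β) ℂ :=
  Matrix.of fun p q => M p.1 q.1 p.2 q.2

/-- Direct sum of two square matrices. -/
def dsum {n m : ℕ} (X : Mat n) (Y : Mat m) : Mat (n + m) :=
  (Matrix.fromBlocks X 0 0 Y).submatrix finSumFinEquiv.symm finSumFinEquiv.symm

/-! Conjugating `Z = X ⊕ Y` by the unitaries `exp (s • K)`, `K` skew-adjoint, and differentiating
at `s = 0` shows that the derivative of `f` at `Z` sends `[Z, K]` to `[f Z, K]`; by `ℂ`-linearity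
this holds for every `K`, as the skew-adjoint matrices span all matrices over `ℂ`. For `K` the
block matrix with `Γ` in its lower-left corner, `[Z, K] = 0` says that `Γ` intertwines `X` and
`Y`, so `[f Z, K] = 0`, which says that `Γ` intertwines `f X` and `f Y`. -/

open NormedSpace

section ConjugationByExponentials

variable {𝔸 : Type*} [NormedRing 𝔸] [NormedAlgebra ℂ 𝔸] [CompleteSpace 𝔸]

theorem hasDerivAt_exp_neg_smul_mul_mul_exp_smul (K A : 𝔸) :
    HasDerivAt (fun s : ℝ => exp (s • -K) * A * exp (s • K)) (A * K - K * A) 0 := by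
  have h := ((hasDerivAt_exp_smul_const (-K) (0 : ℝ)).mul_const A).mul
    (hasDerivAt_exp_smul_const K (0 : ℝ))
  convert h using 1
  · rfl
  · simp only [zero_smul, exp_zero, one_mul, mul_one]
    noncomm_ring

theorem apply_commutator_eq_of_conj_exp_invariant {ι : Type*} [Fintype ι]
    {F : (ι → 𝔸) → 𝔸} {D : (ι → 𝔸) →L[ℂ] 𝔸} {Z : ι → 𝔸} (hF : HasFDerivAt F D Z) {K : 𝔸}
    (hK : ∀ s : ℝ, F (fun j => exp (s • -K) * Z j * exp (s • K)) =
      exp (s • -K) * F Z * exp (s • K)) :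
    D (fun j => Z j * K - K * Z j) = F Z * K - K * F Z := by
  have hcurve : HasDerivAt (fun s : ℝ => fun j => exp (s • -K) * Z j * exp (s • K))
      (fun j => Z j * K - K * Z j) 0 :=
    hasDerivAt_pi.2 fun j => hasDerivAt_exp_neg_smul_mul_mul_exp_smul K (Z j)
  have hcurve0 : (fun j => exp ((0 : ℝ) • -K) * Z j * exp ((0 : ℝ) • K)) = Z := by
    simp
  have hchain := (hcurve0 ▸ hF.restrictScalars ℝ).comp_hasDerivAt (0 : ℝ) hcurve
  refine hchain.unique ?_
  simpa only [Function.comp_def, hK] using hasDerivAt_exp_neg_smul_mul_mul_exp_smul K (F Z)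

end ConjugationByExponentials

section UnitaryInvariance

variable {𝔸 : Type*} [NormedRing 𝔸] [NormedAlgebra ℂ 𝔸] [CompleteSpace 𝔸] [StarRing 𝔸]
  [ContinuousStar 𝔸] [StarModule ℂ 𝔸] {ι : Type*} [Fintype ι]
  {F : (ι → 𝔸) → 𝔸} {D : (ι → 𝔸) →L[ℂ] 𝔸} {Z : ι → 𝔸}

theorem apply_commutator_eq_of_unitary_invariant (hF : HasFDerivAt F D Z)
    (hinv : ∀ U ∈ unitary 𝔸, F (fun j => star U * Z j * U) = star U * F Z * U) (M : 𝔸) :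
    D (fun j => Z j * M - M * Z j) = F Z * M - M * F Z := by
  let defect : 𝔸 →ₗ[ℂ] 𝔸 :=
    D.toLinearMap ∘ₗ LinearMap.pi (fun j => LinearMap.mulLeft ℂ (Z j) - LinearMap.mulRight ℂ (Z j))
      - (LinearMap.mulLeft ℂ (F Z) - LinearMap.mulRight ℂ (F Z))
  have hdefect (K : 𝔸) : defect K = 0 ↔ D (fun j => Z j * K - K * Z j) = F Z * K - K * F Z :=
    sub_eq_zero
  have hskew : skewAdjoint 𝔸 ≤ (LinearMap.ker defect).toAddSubgroup := by
    intro K hK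
    refine (hdefect K).2 (apply_commutator_eq_of_conj_exp_invariant hF fun s => ?_)
    have hsK : s • K ∈ skewAdjoint 𝔸 := skewAdjoint.smul_mem s hK
    have hstar : star (exp (s • K)) = exp (s • -K) := by
      rw [star_exp, skewAdjoint.mem_iff.mp hsK, smul_neg]
    rw [← hstar]
    let +nondep : NormedAlgebra ℚ 𝔸 := .restrictScalars ℚ ℂ 𝔸
    exact hinv _ (exp_mem_unitary_of_mem_skewAdjoint hsK)
  have hsa {H : 𝔸} (hH : IsSelfAdjoint H) : H ∈ LinearMap.ker defect := by
    have h := hskew (Complex.I_smul_mem_skewAdjoint_iff_isSelfAdjoint.2 hH)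
    simpa [smul_smul] using (LinearMap.ker defect).smul_mem (-Complex.I) h
  rw [← hdefect, ← LinearMap.mem_ker, ← realPart_add_I_smul_imaginaryPart M]
  exact add_mem (hsa (realPart M).2) (Submodule.smul_mem _ _ (hsa (imaginaryPart M).2))

theorem commute_apply_of_unitary_invariant (hF : HasFDerivAt F D Z)
    (hinv : ∀ U ∈ unitary 𝔸, F (fun j => star U * Z j * U) = star U * F Z * U) {M : 𝔸}
    (hM : ∀ j, Commute (Z j) M) : Commute (F Z) M := by
  have h := apply_commutator_eq_of_unitary_invariant hF hinv M
  have hzero : (fun j => Z j * M - M * Z j) = 0 := funext fun j => sub_eq_zero.2 (hM j).eq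
  rwa [hzero, map_zero, eq_comm, sub_eq_zero] at h

end UnitaryInvariance

def lowerLeft {n m : ℕ} (Γ : Matrix (Fin m) (Fin n) ℂ) : Mat (n + m) :=
  (Matrix.fromBlocks 0 0 Γ 0).submatrix finSumFinEquiv.symm finSumFinEquiv.symm

section LowerLeft

variable {n m : ℕ}

theorem lowerLeft_mul_dsum (Γ : Matrix (Fin m) (Fin n) ℂ) (A : Mat n) (B : Mat m) :
    lowerLeft Γ * dsum A B = lowerLeft (Γ * A) := by
  simp [lowerLeft, dsum, Matrix.submatrix_mul_equiv, Matrix.fromBlocks_multiply]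

theorem dsum_mul_lowerLeft (Γ : Matrix (Fin m) (Fin n) ℂ) (A : Mat n) (B : Mat m) :
    dsum A B * lowerLeft Γ = lowerLeft (B * Γ) := by
  simp [lowerLeft, dsum, Matrix.submatrix_mul_equiv, Matrix.fromBlocks_multiply]

theorem lowerLeft_injective : Function.Injective (lowerLeft (n := n) (m := m)) := by
  intro Γ₁ Γ₂ h
  have h' := (Matrix.reindex finSumFinEquiv finSumFinEquiv).injective h
  exact (Matrix.fromBlocks_inj.1 h').2.2.1

theorem commute_dsum_lowerLeft_iff {Γ : Matrix (Fin m) (Fin n) ℂ} {A : Mat n} {B : Mat m} :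
    Commute (dsum A B) (lowerLeft Γ) ↔ Γ * A = B * Γ := by
  rw [Commute, SemiconjBy, dsum_mul_lowerLeft, lowerLeft_mul_dsum, lowerLeft_injective.eq_iff,
    eq_comm]

end LowerLeft

theorem free_analytic_respects_intertwinings_general {g : ℕ}
    (S : ∀ n, Set (Fin g → Mat n))
    (hSdsum : ∀ {n m : ℕ} (X : Fin g → Mat n) (Y : Fin g → Mat m),
      X ∈ S n → Y ∈ S m → (fun j => dsum (X j) (Y j)) ∈ S (n + m))
    (f : ∀ n, (Fin g → Mat n) → Mat n)
    (hfa : ∀ n, AnalyticOnNhd ℂ (f n) (S n))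
    (hfdsum : ∀ {n m : ℕ} (X : Fin g → Mat n) (Y : Fin g → Mat m),
      X ∈ S n → Y ∈ S m →
        f (n + m) (fun j => dsum (X j) (Y j)) = dsum (f n X) (f m Y))
    (hfuni : ∀ {n : ℕ} (X : Fin g → Mat n) (U : Mat n),
      X ∈ S n → U ∈ Matrix.unitaryGroup (Fin n) ℂ →
        f n (fun j => Uᴴ * X j * U) = Uᴴ * f n X * U)
    {n m : ℕ} (X : Fin g → Mat n) (Y : Fin g → Mat m)
    (hX : X ∈ S n) (hY : Y ∈ S m)
    (Γ : Matrix (Fin m) (Fin n) ℂ) (hΓ : ∀ j, Γ * X j = Y j * Γ) :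
    Γ * f n X = f m Y * Γ := by
  have hZ := hSdsum X Y hX hY
  have hcomm := commute_apply_of_unitary_invariant
    (hfa (n + m) _ hZ).differentiableAt.hasFDerivAt (fun U hU => hfuni _ U hZ hU)
    (fun j => commute_dsum_lowerLeft_iff.2 (hΓ j))
  rw [hfdsum X Y hX hY] at hcomm
  exact commute_dsum_lowerLeft_iff.1 hcomm

/-- Proposition 1.2: a free analytic function on a free open set respects intertwinings. -/
theorem free_analytic_respects_intertwinings {g : ℕ} (hg : 0 < g)
    (S : ∀ n, Set (Fin g → Mat n))
    (hSopen : ∀ n, IsOpen (S n))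
    (hSdsum : ∀ {n m : ℕ} (X : Fin g → Mat n) (Y : Fin g → Mat m),
      X ∈ S n → Y ∈ S m → (fun j => dsum (X j) (Y j)) ∈ S (n + m))
    (hSuni : ∀ {n : ℕ} (X : Fin g → Mat n) (U : Mat n),
      X ∈ S n → U ∈ Matrix.unitaryGroup (Fin n) ℂ → (fun j => Uᴴ * X j * U) ∈ S n)
    (f : ∀ n, (Fin g → Mat n) → Mat n)
    (hfa : ∀ n, AnalyticOnNhd ℂ (f n) (S n))
    (hfdsum : ∀ {n m : ℕ} (X : Fin g → Mat n) (Y : Fin g → Mat m),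
      X ∈ S n → Y ∈ S m →
        f (n + m) (fun j => dsum (X j) (Y j)) = dsum (f n X) (f m Y))
    (hfuni : ∀ {n : ℕ} (X : Fin g → Mat n) (U : Mat n),
      X ∈ S n → U ∈ Matrix.unitaryGroup (Fin n) ℂ →
        f n (fun j => Uᴴ * X j * U) = Uᴴ * f n X * U)
    {n m : ℕ} (X : Fin g → Mat n) (Y : Fin g → Mat m)
    (hX : X ∈ S n) (hY : Y ∈ S m)
    (Γ : Matrix (Fin m) (Fin n) ℂ) (hΓ : ∀ j, Γ * X j = Y j * Γ) :
    Γ * f n X = f m Y * Γ :=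
  free_analytic_respects_intertwinings_general S hSdsum f hfa hfdsum hfuni X Y hX hY Γ hΓ
end
end

section
/- Let A be a g-tuple of d×d complex matrices. The following are equivalent: (i) D_A is a spectraball, i.e., there exist d', e' and a g-tuple G of d'×e' complex matrices with D_A[n] = B_G[n] for all n; (ii) for every n, every X ∈ D_A[n], and every n×n unitary matrix U, the tuple UX = (UX₁,…,UX_g) belongs to D_A[n]; (iii) for every n, D_A[n] = {X ∈ Mₙ(ℂ)^g : ‖Σ_j A_j ⊗ X_j‖ < 1}. -/
open scoped ComplexOrder Kronecker Matrix Matrix.Norms.L2Operator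

noncomputable section

/-- The pencil `L_A(X)` of a free spectrahedron determined by a `g`-tuple `A`. -/
def LpenA {g d n : ℕ} (A : Fin g → Matrix (Fin d) (Fin d) ℂ) (X : Fin g → Mat n) :
    Matrix (Fin d × Fin n) (Fin d × Fin n) ℂ :=
  1 + (∑ j, A j ⊗ₖ X j) + ∑ j, (A j)ᴴ ⊗ₖ (X j)ᴴ

/-- The free spectrahedron `D_A` at level `n`. -/
def DAset {g d : ℕ} (A : Fin g → Matrix (Fin d) (Fin d) ℂ) (n : ℕ) :
    Set (Fin g → Mat n) := {X | (LpenA A X).PosDef}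

/-!
Since `Λ_G(UX) = (I ⊗ U) Λ_G(X)` and left multiplication by a unitary preserves the operator
norm, a spectraball is invariant under left unitary multiplication.

Conversely, up to a permutation of the indices, the pencil of the off-diagonal tuple
`[[0, X], [0, 0]]` is `[[I, Λ_A(X)], [Λ_A(X)*, I]]`, which is positive definite exactly when
`I - Λ_A(X)* Λ_A(X)` is, i.e. when `‖Λ_A(X)‖ < 1`. If `D_A` is invariant under left unitaries,
then `X ∈ D_A` iff `[[0, X], [0, 0]] ∈ D_A`: the unitaries `[[0, I], [±I, 0]]` carry `X ⊕ X` to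
`[[0, X], [±X, 0]]`, whose average is `[[0, X], [0, 0]]` (`D_A` is convex); in the other direction,
swap the two blocks and compress to the lower right corner.
-/

open Matrix

theorem CStarAlgebra.isStrictlyPositive_one_sub_iff_norm_lt_one {A : Type*} [CStarAlgebra A]
    [PartialOrder A] [StarOrderedRing A] {b : A} (hb : 0 ≤ b) :
    IsStrictlyPositive (1 - b) ↔ ‖b‖ < 1 := by
  obtain hA | hA := subsingleton_or_nontrivial A
  · simp [Subsingleton.elim b 0, IsStrictlyPositive.of_subsingleton]
  constructor
  · intro h
    have hmem : 1 - ‖b‖ ∈ spectrum ℝ (1 - b) := by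
      rw [← map_one (algebraMap ℝ A), ← spectrum.singleton_sub_eq]
      exact Set.sub_mem_sub rfl (norm_mem_spectrum_of_nonneg hb)
    linarith [h.spectrum_pos hmem]
  · intro h
    refine (isStrictlyPositive_algebraMap (A := A) (sub_pos.mpr h)).of_le ?_
    rw [map_sub, map_one]
    exact sub_le_sub_left (IsSelfAdjoint.of_nonneg hb).le_algebraMap_norm_self 1

namespace Matrix

variable {𝕜 m n : Type*} [RCLike 𝕜]

theorem posDef_submatrix_equiv {M : Matrix n n 𝕜} (e : m ≃ n) :
    (M.submatrix e e).PosDef ↔ M.PosDef :=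
  ⟨fun h => by simpa using h.submatrix e.symm.injective, fun h => h.submatrix e.injective⟩

variable [Fintype m] [Fintype n] [DecidableEq m] [DecidableEq n]

theorem posDef_iff_posSemidef_and_isUnit {M : Matrix m m 𝕜} :
    M.PosDef ↔ M.PosSemidef ∧ IsUnit M :=
  ⟨fun h => ⟨h.posSemidef, h.isUnit⟩, fun h => h.1.posDef_iff_isUnit.mpr h.2⟩

theorem posDef_fromBlocks₁₁_iff {A : Matrix m m 𝕜} (hA : A.PosDef) (B : Matrix m n 𝕜)
    (D : Matrix n n 𝕜) : (fromBlocks A B Bᴴ D).PosDef ↔ (D - Bᴴ * A⁻¹ * B).PosDef := by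
  have := hA.isUnit.invertible
  rw [posDef_iff_posSemidef_and_isUnit, posDef_iff_posSemidef_and_isUnit,
    hA.fromBlocks₁₁ B D, isUnit_fromBlocks_iff_of_invertible₁₁, invOf_eq_nonsing_inv]

theorem l2_opNorm_unitary_mul {U : Matrix m m 𝕜} (hU : U ∈ unitaryGroup m 𝕜) (M : Matrix m n 𝕜) :
    ‖U * M‖ = ‖M‖ := by
  have h : ‖U * M‖ * ‖U * M‖ = ‖M‖ * ‖M‖ := by
    rw [← l2_opNorm_conjTranspose_mul_self, ← l2_opNorm_conjTranspose_mul_self,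
      conjTranspose_mul, Matrix.mul_assoc, ← Matrix.mul_assoc Uᴴ, ← star_eq_conjTranspose,
      mem_unitaryGroup_iff'.mp hU, Matrix.one_mul]
  exact (mul_self_inj (norm_nonneg _) (norm_nonneg _)).mp h

open scoped MatrixOrder in
theorem posDef_fromBlocks_one_iff_norm_lt_one (M : Matrix m n ℂ) :
    (fromBlocks 1 M Mᴴ 1).PosDef ↔ ‖M‖ < 1 := by
  rw [posDef_fromBlocks₁₁_iff PosDef.one, inv_one, Matrix.mul_one,
    ← isStrictlyPositive_iff_posDef, CStarAlgebra.isStrictlyPositive_one_sub_iff_norm_lt_one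
      (posSemidef_conjTranspose_mul_self M).nonneg, l2_opNorm_conjTranspose_mul_self]
  simpa using (mul_self_lt_mul_self_iff (norm_nonneg M) zero_le_one).symm

theorem submatrix_equiv_mem_unitaryGroup {U : Matrix n n 𝕜} (hU : U ∈ unitaryGroup n 𝕜)
    (e : m ≃ n) : U.submatrix e e ∈ unitaryGroup m 𝕜 := by
  rw [mem_unitaryGroup_iff, star_eq_conjTranspose, conjTranspose_submatrix, submatrix_mul_equiv,
    ← star_eq_conjTranspose, mem_unitaryGroup_iff.mp hU, submatrix_one_equiv]

theorem fromBlocks_zero_mem_unitaryGroup {U V : Matrix m m 𝕜} (hU : U ∈ unitaryGroup m 𝕜)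
    (hV : V ∈ unitaryGroup m 𝕜) : fromBlocks 0 U V 0 ∈ unitaryGroup (m ⊕ m) 𝕜 := by
  rw [mem_unitaryGroup_iff] at hU hV ⊢
  simp only [star_eq_conjTranspose] at hU hV ⊢
  simp [fromBlocks_conjTranspose, fromBlocks_multiply, hU, hV]

end Matrix

section FreeSpectrahedron

variable {ι k l m m' p : Type*} [Fintype ι]

/-- `Λ_G(X)`. -/
def linearPencil (G : ι → Matrix k l ℂ) (X : ι → Matrix m p ℂ) : Matrix (k × m) (l × p) ℂ :=
  ∑ j, G j ⊗ₖ X j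

theorem linearPencil_mul_left [Fintype k] [DecidableEq k] [Fintype m] (G : ι → Matrix k l ℂ)
    (U : Matrix m m ℂ) (X : ι → Matrix m p ℂ) :
    linearPencil G (fun j => U * X j) = ((1 : Matrix k k ℂ) ⊗ₖ U) * linearPencil G X := by
  rw [linearPencil, linearPencil, Matrix.mul_sum]
  simp only [← mul_kronecker_mul, Matrix.one_mul]

theorem norm_linearPencil_unitary_mul [Fintype k] [DecidableEq k] [Fintype l] [DecidableEq l]
    [Fintype m] [DecidableEq m] [Fintype p] [DecidableEq p] (G : ι → Matrix k l ℂ)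
    {U : Matrix m m ℂ} (hU : U ∈ unitaryGroup m ℂ) (X : ι → Matrix m p ℂ) :
    ‖linearPencil G (fun j => U * X j)‖ = ‖linearPencil G X‖ := by
  rw [linearPencil_mul_left, l2_opNorm_unitary_mul (kronecker_mem_unitary (one_mem _) hU)]

theorem linearPencil_submatrix {m₀ p₀ : Type*} (G : ι → Matrix k l ℂ) (X : ι → Matrix m p ℂ)
    (r : m₀ → m) (c : p₀ → p) :
    linearPencil G (fun j => (X j).submatrix r c) =
      (linearPencil G X).submatrix (Prod.map id r) (Prod.map id c) := by
  ext
  simp [linearPencil, Matrix.sum_apply]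

theorem linearPencil_fromBlocks {p' : Type*} (G : ι → Matrix k l ℂ) (P : ι → Matrix m p ℂ)
    (Q : ι → Matrix m p' ℂ) (R : ι → Matrix m' p ℂ) (S : ι → Matrix m' p' ℂ) :
    linearPencil G (fun j => fromBlocks (P j) (Q j) (R j) (S j)) =
      (fromBlocks (linearPencil G P) (linearPencil G Q) (linearPencil G R)
        (linearPencil G S)).submatrix (Equiv.prodSumDistrib k m m')
        (Equiv.prodSumDistrib l p p') := by
  ext ⟨i, a | a⟩ ⟨i', b | b⟩ <;> simp [linearPencil, Matrix.sum_apply]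

@[simp]
theorem linearPencil_zero (G : ι → Matrix k l ℂ) :
    linearPencil G (fun _ => (0 : Matrix m p ℂ)) = 0 := by
  simp [linearPencil]

theorem linearPencil_add (G : ι → Matrix k l ℂ) (X Y : ι → Matrix m p ℂ) :
    linearPencil G (X + Y) = linearPencil G X + linearPencil G Y := by
  simp [linearPencil, kronecker_add, Finset.sum_add_distrib]

theorem linearPencil_smul (G : ι → Matrix k l ℂ) (a : ℝ) (X : ι → Matrix m p ℂ) :
    linearPencil G (a • X) = a • linearPencil G X := by
  simp [linearPencil, kronecker_smul, Finset.smul_sum]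

/-- `L_A(X)`. -/
def monicPencil [DecidableEq k] [DecidableEq m] (A : ι → Matrix k k ℂ) (X : ι → Matrix m m ℂ) :
    Matrix (k × m) (k × m) ℂ :=
  1 + linearPencil A X + (linearPencil A X)ᴴ

@[simp]
theorem monicPencil_zero [DecidableEq k] [DecidableEq m] (A : ι → Matrix k k ℂ) :
    monicPencil A (fun _ => (0 : Matrix m m ℂ)) = 1 := by
  simp [monicPencil]

theorem monicPencil_submatrix [DecidableEq k] [DecidableEq m] [DecidableEq m']
    (A : ι → Matrix k k ℂ) (X : ι → Matrix m' m' ℂ) {f : m → m'} (hf : Function.Injective f) :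
    monicPencil A (fun j => (X j).submatrix f f) =
      (monicPencil A X).submatrix (Prod.map id f) (Prod.map id f) := by
  rw [monicPencil, monicPencil, linearPencil_submatrix, conjTranspose_submatrix,
    ← submatrix_one _ (Function.injective_id.prodMap hf)]
  rfl

theorem monicPencil_smul_add_smul [DecidableEq k] [DecidableEq m] (A : ι → Matrix k k ℂ)
    (X Y : ι → Matrix m m ℂ) {a b : ℝ} (hab : a + b = 1) :
    monicPencil A (a • X + b • Y) = a • monicPencil A X + b • monicPencil A Y := by
  simp only [monicPencil, linearPencil_add, linearPencil_smul, conjTranspose_add,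
    conjTranspose_smul, star_trivial]
  linear_combination (norm := module) -(hab • (1 : Matrix (k × m) (k × m) ℂ))

theorem monicPencil_fromBlocks [DecidableEq k] [DecidableEq m] [DecidableEq m']
    (A : ι → Matrix k k ℂ) (P : ι → Matrix m m ℂ) (Q : ι → Matrix m m' ℂ)
    (R : ι → Matrix m' m ℂ) (S : ι → Matrix m' m' ℂ) :
    monicPencil A (fun j => fromBlocks (P j) (Q j) (R j) (S j)) =
      (fromBlocks (monicPencil A P) (linearPencil A Q + (linearPencil A R)ᴴ)
        (linearPencil A R + (linearPencil A Q)ᴴ) (monicPencil A S)).submatrix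
        (Equiv.prodSumDistrib k m m') (Equiv.prodSumDistrib k m m') := by
  rw [monicPencil, linearPencil_fromBlocks, conjTranspose_submatrix, fromBlocks_conjTranspose]
  ext ⟨_, _ | _⟩ ⟨_, _ | _⟩ <;> simp [monicPencil, one_apply, add_assoc]

/-- The level `m` of `D_A`, for an arbitrary finite index type `m`, so that block tuples over
`m ⊕ m'` need no reindexing to `Fin`. -/
def freeSpectrahedron [Fintype k] [DecidableEq k] (A : ι → Matrix k k ℂ) (m : Type*) [Fintype m]
    [DecidableEq m] : Set (ι → Matrix m m ℂ) :=
  {X | (monicPencil A X).PosDef}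

variable [Fintype k] [DecidableEq k] [Fintype m] [DecidableEq m] {A : ι → Matrix k k ℂ}

theorem mem_freeSpectrahedron {X : ι → Matrix m m ℂ} :
    X ∈ freeSpectrahedron A m ↔ (monicPencil A X).PosDef :=
  Iff.rfl

theorem submatrix_mem_freeSpectrahedron [Fintype m'] [DecidableEq m'] {X : ι → Matrix m' m' ℂ}
    (hX : X ∈ freeSpectrahedron A m') {f : m → m'} (hf : Function.Injective f) :
    (fun j => (X j).submatrix f f) ∈ freeSpectrahedron A m := by
  rw [mem_freeSpectrahedron, monicPencil_submatrix A X hf]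
  exact hX.submatrix (Function.injective_id.prodMap hf)

theorem convex_freeSpectrahedron : Convex ℝ (freeSpectrahedron A m) := by
  refine convex_iff_forall_pos.mpr fun X hX Y hY a b ha hb hab => ?_
  rw [mem_freeSpectrahedron, monicPencil_smul_add_smul A X Y hab]
  exact (hX.smul ha).add (hY.smul hb)

theorem fromBlocks_mem_freeSpectrahedron [Fintype m'] [DecidableEq m']
    {X : ι → Matrix m m ℂ} {Y : ι → Matrix m' m' ℂ} (hX : X ∈ freeSpectrahedron A m)
    (hY : Y ∈ freeSpectrahedron A m') :
    (fun j => fromBlocks (X j) 0 0 (Y j)) ∈ freeSpectrahedron A (m ⊕ m') := by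
  have hXY := posDef_fromBlocks₁₁_iff hX 0 (monicPencil A Y)
  simp only [conjTranspose_zero, Matrix.mul_zero, sub_zero] at hXY
  simpa [mem_freeSpectrahedron, monicPencil_fromBlocks, posDef_submatrix_equiv, hXY] using hY

theorem fromBlocks_offDiagonal_mem_freeSpectrahedron_iff [Fintype m'] [DecidableEq m']
    (X : ι → Matrix m m' ℂ) :
    (fun j => fromBlocks 0 (X j) 0 0) ∈ freeSpectrahedron A (m ⊕ m') ↔ ‖linearPencil A X‖ < 1 := by
  rw [← posDef_fromBlocks_one_iff_norm_lt_one]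
  simp [mem_freeSpectrahedron, monicPencil_fromBlocks, posDef_submatrix_equiv]

end FreeSpectrahedron

section UnitaryInvariance

variable {ι k : Type*} [Fintype ι] [Fintype k] [DecidableEq k] {A : ι → Matrix k k ℂ}

theorem unitary_mul_mem_freeSpectrahedron_of_fin
    (h : ∀ n, ∀ X ∈ freeSpectrahedron A (Fin n), ∀ U ∈ unitaryGroup (Fin n) ℂ,
      (fun j => U * X j) ∈ freeSpectrahedron A (Fin n))
    {m : Type*} [Fintype m] [DecidableEq m] {X : ι → Matrix m m ℂ}
    (hX : X ∈ freeSpectrahedron A m) {U : Matrix m m ℂ} (hU : U ∈ unitaryGroup m ℂ) :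
    (fun j => U * X j) ∈ freeSpectrahedron A m := by
  let e := Fintype.equivFin m
  have hUX := h _ _ (submatrix_mem_freeSpectrahedron hX e.symm.injective) _
    (submatrix_equiv_mem_unitaryGroup hU e.symm)
  simpa [submatrix_mul_equiv] using submatrix_mem_freeSpectrahedron hUX e.injective

theorem mem_freeSpectrahedron_iff_norm_lt_one {m : Type*} [Fintype m] [DecidableEq m]
    (h : ∀ Y ∈ freeSpectrahedron A (m ⊕ m), ∀ U ∈ unitaryGroup (m ⊕ m) ℂ,
      (fun j => U * Y j) ∈ freeSpectrahedron A (m ⊕ m))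
    (X : ι → Matrix m m ℂ) :
    X ∈ freeSpectrahedron A m ↔ ‖linearPencil A X‖ < 1 := by
  have hswap := fromBlocks_zero_mem_unitaryGroup (one_mem (unitaryGroup m ℂ))
    (one_mem (unitaryGroup m ℂ))
  rw [← fromBlocks_offDiagonal_mem_freeSpectrahedron_iff]
  constructor
  · intro hX
    have hXX := fromBlocks_mem_freeSpectrahedron hX hX
    have hsym := h _ hXX _ hswap
    have hskew := h _ hXX _ (fromBlocks_zero_mem_unitaryGroup (one_mem (unitaryGroup m ℂ))
      (by simp [mem_unitaryGroup_iff] : -1 ∈ unitaryGroup m ℂ))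
    have hmid := convex_freeSpectrahedron hsym hskew (by norm_num : (0 : ℝ) ≤ 1 / 2)
      (by norm_num : (0 : ℝ) ≤ 1 / 2) (by norm_num)
    convert hmid using 1
    ext j : 1
    simp only [Pi.add_apply, Pi.smul_apply, fromBlocks_multiply, fromBlocks_smul, fromBlocks_add]
    congr 1 <;> norm_num [← add_smul]
  · intro hX
    convert submatrix_mem_freeSpectrahedron (h _ hX _ hswap) Sum.inr_injective using 2 with j
    ext
    simp [fromBlocks_multiply]

end UnitaryInvariance

theorem LpenA_eq_monicPencil {g d n : ℕ} (A : Fin g → Matrix (Fin d) (Fin d) ℂ)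
    (X : Fin g → Mat n) : LpenA A X = monicPencil A X := by
  rw [LpenA, monicPencil, linearPencil, conjTranspose_sum]
  simp only [conjTranspose_kronecker]

theorem DAset_eq_freeSpectrahedron {g d : ℕ} (A : Fin g → Matrix (Fin d) (Fin d) ℂ) (n : ℕ) :
    DAset A n = freeSpectrahedron A (Fin n) := by
  ext X
  simp only [DAset, freeSpectrahedron, LpenA_eq_monicPencil]

theorem spectrahedron_is_spectraball_tfae_general {g d : ℕ}
    (A : Fin g → Matrix (Fin d) (Fin d) ℂ) :
    [(∃ (d' e' : ℕ) (G : Fin g → Matrix (Fin d') (Fin e') ℂ),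
        ∀ (n : ℕ) (X : Fin g → Mat n), X ∈ DAset A n ↔ ‖∑ j, G j ⊗ₖ X j‖ < 1),
      (∀ (n : ℕ), ∀ X ∈ DAset A n, ∀ U ∈ Matrix.unitaryGroup (Fin n) ℂ,
        (fun j => U * X j) ∈ DAset A n),
      (∀ (n : ℕ) (X : Fin g → Mat n), X ∈ DAset A n ↔ ‖∑ j, A j ⊗ₖ X j‖ < 1)].TFAE := by
  simp only [DAset_eq_freeSpectrahedron]
  tfae_have 3 → 1 := fun h => ⟨d, d, A, h⟩
  tfae_have 1 → 2 := by
    rintro ⟨d', e', G, hG⟩ n X hX U hU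
    rw [hG] at hX ⊢
    exact (norm_linearPencil_unitary_mul G hU X).trans_lt hX
  tfae_have 2 → 3 := fun h n =>
    mem_freeSpectrahedron_iff_norm_lt_one fun _ hY _ hU =>
      unitary_mul_mem_freeSpectrahedron_of_fin h hY hU
  tfae_finish

/-- Proposition 2.3: a free spectrahedron is a spectraball if and only if it is invariant
under left multiplication by unitaries, if and only if it equals its associated spectraball. -/
theorem spectrahedron_is_spectraball_tfae {g d : ℕ} (hg : 0 < g) (hd : 0 < d)
    (A : Fin g → Matrix (Fin d) (Fin d) ℂ) :
    [(∃ (d' e' : ℕ) (G : Fin g → Matrix (Fin d') (Fin e') ℂ),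
        ∀ (n : ℕ) (X : Fin g → Mat n), X ∈ DAset A n ↔ ‖∑ j, G j ⊗ₖ X j‖ < 1),
      (∀ (n : ℕ), ∀ X ∈ DAset A n, ∀ U ∈ Matrix.unitaryGroup (Fin n) ℂ,
        (fun j => U * X j) ∈ DAset A n),
      (∀ (n : ℕ) (X : Fin g → Mat n), X ∈ DAset A n ↔ ‖∑ j, A j ⊗ₖ X j‖ < 1)].TFAE :=
  spectrahedron_is_spectraball_tfae_general A
end
end

section
/- Assume C₁ and C₂ are invertible and that the star subalgebra of M_s(ℂ) generated by {C₁*C₁, C₂*C₂} and the star subalgebra generated by {C₁C₁*, C₂C₂*} both equal M_s(ℂ). Then 𝔓 is not a spectraball: there do not exist positive integers d, e and a pair G = (G₁, G₂) of d×e complex matrices such that 𝔓[n] = B_G[n] for all n. -/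
/-!
Suppose `𝔓 = B_G`. For `0 ≤ r < 1` the level-one points `(r, 0)` and `(0, r)` lie in `𝔓`, since
`ℒ(X)` is positive definite as soon as `‖Y₁‖ + ‖Y₂‖ < 1`; hence `r‖G₁‖, r‖G₂‖ < 1`, i.e.
`‖G₁‖, ‖G₂‖ ≤ 1`. Consequently the level-two point `X = (t E₁₂, t E₂₁)` has
`‖Λ_G(X)‖ ≤ t max(‖G₁‖, ‖G₂‖) < 1` for every `0 < t < 1`, so it would lie in `𝔓`.

It does not when `t` is close to `1`. As `‖C₁‖ = 1` and `C₂*` is invertible, some `v` has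
`‖v‖² < ‖C₁v‖² + ‖C₂*v‖²`, and then some `t < 1` has `‖v‖² < t² (‖C₁v‖² + ‖C₂*v‖²)`.
For `z = (-t C₁v ⊗ e₁, v ⊗ e₂, 0, -t C₂*v ⊗ e₁)` one computes
`⟨ℒ(X) z, z⟩ = ‖v‖² - t² (‖C₁v‖² + ‖C₂*v‖²) < 0`.
-/

open scoped ComplexOrder Kronecker Matrix Matrix.Norms.L2Operator

noncomputable section

/-- The pencil `ℒ(X)` whose positivity defines the free spectrahedron `𝔓`. -/
def scrL {s : ℕ} (C1 C2 : Matrix (Fin s) (Fin s) ℂ) {α : Type*} [DecidableEq α]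
    (X : Matrix α α ℂ × Matrix α α ℂ) :
    Matrix (Fin 4 × (Fin s × α)) (Fin 4 × (Fin s × α)) ℂ :=
  blockMat ![![1, C1 ⊗ₖ X.1, C2 ⊗ₖ X.2, 0],
             ![(C1 ⊗ₖ X.1)ᴴ, 1, 0, C2 ⊗ₖ X.2],
             ![(C2 ⊗ₖ X.2)ᴴ, 0, 1, C1 ⊗ₖ X.1],
             ![0, (C2 ⊗ₖ X.2)ᴴ, (C1 ⊗ₖ X.1)ᴴ, 1]]

/-- The free spectrahedron `𝔓` at level `n`. -/
def freeP {s : ℕ} (C1 C2 : Matrix (Fin s) (Fin s) ℂ) (n : ℕ) : Set (Mat n × Mat n) :=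
  {X | (scrL C1 C2 X).PosDef}

open Matrix WithLp Filter Topology

lemma exists_mem_Ioo_lt_sq_mul {a b : ℝ} (h : a < b) : ∃ t ∈ Set.Ioo (0 : ℝ) 1, a < t ^ 2 * b := by
  have hlim : Tendsto (fun t : ℝ => t ^ 2 * b) (𝓝[<] 1) (𝓝 b) :=
    ((by fun_prop : Continuous fun t : ℝ => t ^ 2 * b).tendsto' 1 b (by simp)).mono_left
      nhdsWithin_le_nhds
  exact (Eventually.and (Ioo_mem_nhdsLT one_pos) (hlim.eventually (lt_mem_nhds h))).exists

lemma le_one_of_forall_mul_lt_one {x : ℝ} (h : ∀ r : ℝ, 0 ≤ r → r < 1 → r * x < 1) : x ≤ 1 := by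
  by_contra! hx
  have := h x⁻¹ (by positivity) (inv_lt_one_of_one_lt₀ hx)
  rw [inv_mul_cancel₀ (by positivity)] at this
  exact lt_irrefl _ this

section EuclideanNorm

variable {ι κ : Type*} [Fintype ι] [Fintype κ]

lemma re_star_dotProduct_self (u : ι → ℂ) : (star u ⬝ᵥ u).re = ‖toLp 2 u‖ ^ 2 := by
  rw [dotProduct_comm, ← EuclideanSpace.inner_toLp_toLp]
  exact inner_self_eq_norm_sq (𝕜 := ℂ) _

lemma norm_star_dotProduct_le (u w : ι → ℂ) : ‖star u ⬝ᵥ w‖ ≤ ‖toLp 2 u‖ * ‖toLp 2 w‖ := by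
  rw [dotProduct_comm, ← EuclideanSpace.inner_toLp_toLp]
  exact norm_inner_le_norm _ _

lemma sq_norm_toLp_prod (y : ι × κ → ℂ) :
    ‖toLp 2 y‖ ^ 2 = ∑ k, ‖toLp 2 (fun i => y (i, k))‖ ^ 2 := by
  simp only [EuclideanSpace.norm_sq_eq, Fintype.sum_prod_type]
  exact Finset.sum_comm

lemma sq_norm_toLp_uncurry (w : κ → ι → ℂ) :
    ‖toLp 2 (Function.uncurry w)‖ ^ 2 = ∑ k, ‖toLp 2 (w k)‖ ^ 2 := by
  simp only [EuclideanSpace.norm_sq_eq, Fintype.sum_prod_type, Function.uncurry_apply_pair]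

variable [DecidableEq ι]

lemma norm_toLp_mulVec_le (A : Matrix κ ι ℂ) (u : ι → ℂ) :
    ‖toLp 2 (A *ᵥ u)‖ ≤ ‖A‖ * ‖toLp 2 u‖ :=
  A.l2_opNorm_mulVec (toLp 2 u)

lemma l2_opNorm_le_of_norm_mulVec_le (A : Matrix κ ι ℂ) {c : ℝ} (hc : 0 ≤ c)
    (h : ∀ u, ‖toLp 2 (A *ᵥ u)‖ ≤ c * ‖toLp 2 u‖) : ‖A‖ ≤ c :=
  ContinuousLinearMap.opNorm_le_bound _ hc fun x => h (ofLp x)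

lemma abs_re_star_dotProduct_mulVec_le (A : Matrix κ ι ℂ) (u : κ → ℂ) (w : ι → ℂ) :
    |(star u ⬝ᵥ A *ᵥ w).re| ≤ ‖A‖ * (‖toLp 2 u‖ ^ 2 + ‖toLp 2 w‖ ^ 2) / 2 := by
  calc |(star u ⬝ᵥ A *ᵥ w).re| ≤ ‖toLp 2 u‖ * (‖A‖ * ‖toLp 2 w‖) :=
        (Complex.abs_re_le_norm _).trans <| (norm_star_dotProduct_le _ _).trans <|
          by gcongr; exact norm_toLp_mulVec_le A w
    _ ≤ ‖A‖ * (‖toLp 2 u‖ ^ 2 + ‖toLp 2 w‖ ^ 2) / 2 := by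
        nlinarith [two_mul_le_add_sq ‖toLp 2 u‖ ‖toLp 2 w‖, norm_nonneg A]

lemma exists_sq_norm_lt_sq_norm_mulVec_add (A B : Matrix ι ι ℂ) (hA : 1 ≤ ‖A‖) (hB : IsUnit B) :
    ∃ v : ι → ℂ, ‖toLp 2 v‖ ^ 2 < ‖toLp 2 (A *ᵥ v)‖ ^ 2 + ‖toLp 2 (B *ᵥ v)‖ ^ 2 := by
  set c := ‖B⁻¹‖ ^ 2
  have hc : 0 ≤ c := by positivity
  have hBv (v : ι → ℂ) : ‖toLp 2 v‖ ^ 2 ≤ c * ‖toLp 2 (B *ᵥ v)‖ ^ 2 := by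
    have h := norm_toLp_mulVec_le B⁻¹ (B *ᵥ v)
    rw [mulVec_mulVec, nonsing_inv_mul _ ((isUnit_iff_isUnit_det B).1 hB), one_mulVec] at h
    rw [← mul_pow]
    exact pow_le_pow_left₀ (norm_nonneg _) h 2
  -- any `v` with `c / (c + 1) * ‖v‖² < ‖A v‖²` works, because `‖v‖² ≤ c ‖B v‖²`
  have hr : √(c / (c + 1)) < ‖A‖ :=
    ((Real.sqrt_lt' one_pos).2 (by rw [one_pow, div_lt_one (by positivity)]; linarith)).trans_le hA
  obtain ⟨x, hx⟩ := (toEuclideanCLM (𝕜 := ℂ) (n := ι) A).exists_mul_lt_of_lt_opNorm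
    (Real.sqrt_nonneg _) hr
  refine ⟨ofLp x, ?_⟩
  have hAx : c / (c + 1) * ‖x‖ ^ 2 < ‖toLp 2 (A *ᵥ ofLp x)‖ ^ 2 := by
    have := pow_lt_pow_left₀ hx (by positivity) two_ne_zero
    rwa [mul_pow, Real.sq_sqrt (by positivity)] at this
  rw [div_mul_eq_mul_div, div_lt_iff₀ (by positivity)] at hAx
  have hBx := hBv (ofLp x)
  rw [toLp_ofLp] at hBx ⊢
  refine lt_of_mul_lt_mul_left (a := c + 1) ?_ (by positivity)
  nlinarith [sq_nonneg ‖toLp 2 (B *ᵥ ofLp x)‖]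

end EuclideanNorm

section Blocks

variable {ι κ : Type*} [DecidableEq κ]

def blockSingle (k : κ) (u : ι → ℂ) : ι × κ → ℂ :=
  fun p => if p.2 = k then u p.1 else 0

@[simp]
lemma blockSingle_apply (k : κ) (u : ι → ℂ) (i : ι) (j : κ) :
    blockSingle k u (i, j) = if j = k then u i else 0 := rfl

variable [Fintype ι] [Fintype κ]

lemma norm_toLp_blockSingle (k : κ) (u : ι → ℂ) :
    ‖toLp 2 (blockSingle k u)‖ = ‖toLp 2 u‖ := by
  rw [← sq_eq_sq₀ (norm_nonneg _) (norm_nonneg _), sq_norm_toLp_prod, Finset.sum_eq_single k]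
  · simp
  · intro j _ hj
    have hzero : (fun i => blockSingle k u (i, j)) = 0 := funext fun i => if_neg hj
    rw [hzero]
    simp
  · simp

lemma star_blockSingle_dotProduct_blockSingle (k : κ) (u w : ι → ℂ) :
    star (blockSingle k u) ⬝ᵥ blockSingle k w = star u ⬝ᵥ w := by
  simp only [dotProduct, Fintype.sum_prod_type, Pi.star_apply, blockSingle_apply]
  rw [Finset.sum_comm, Finset.sum_eq_single k] <;> simp +contextual

lemma kronecker_single_mulVec {ι' κ' : Type*} [DecidableEq κ'] (A : Matrix ι' ι ℂ)
    (i : κ') (j : κ) (c : ℂ) (x : ι × κ → ℂ) :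
    (A ⊗ₖ single i j c) *ᵥ x = blockSingle i (c • A *ᵥ fun b => x (b, j)) := by
  ext ⟨a, k⟩
  simp only [mulVec, dotProduct, Fintype.sum_prod_type, kroneckerMap_apply, single_apply,
    blockSingle_apply, Pi.smul_apply, smul_eq_mul, Finset.mul_sum]
  split_ifs with hk
  · subst hk
    simp only [true_and, mul_ite, mul_zero, ite_mul, mul_assoc, zero_mul, Finset.sum_ite_eq,
      Finset.mem_univ, if_true]
    exact Finset.sum_congr rfl fun b _ => by ring
  · have hik : i ≠ k := fun h => hk h.symm
    simp [hik]

lemma kronecker_single_mulVec_blockSingle {ι' κ' : Type*} [DecidableEq κ'] (A : Matrix ι' ι ℂ)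
    (i : κ') (j : κ) (c : ℂ) (u : ι → ℂ) :
    (A ⊗ₖ single i j c) *ᵥ blockSingle j u = blockSingle i (c • A *ᵥ u) := by
  rw [kronecker_single_mulVec]
  simp

end Blocks

section KroneckerNorm

variable {ι κ : Type*} [Fintype ι] [Fintype κ] [DecidableEq ι]

lemma l2_opNorm_kronecker_one {ο : Type*} [Fintype ο] [DecidableEq ο] [Unique ο]
    (A : Matrix κ ι ℂ) : ‖A ⊗ₖ (1 : Matrix ο ο ℂ)‖ = ‖A‖ := by
  have hmulVec (x : ι × ο → ℂ) :
      (A ⊗ₖ (1 : Matrix ο ο ℂ)) *ᵥ x = blockSingle default (A *ᵥ fun b => x (b, default)) := by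
    have hone : (1 : Matrix ο ο ℂ) = single default default 1 := by
      ext i j
      obtain rfl := Subsingleton.elim i j
      simp [Subsingleton.elim i default]
    rw [hone, kronecker_single_mulVec, one_smul]
  have hslice (x : ι × ο → ℂ) : blockSingle default (fun b => x (b, default)) = x := by
    ext ⟨b, o⟩
    simp [Subsingleton.elim o default]
  refine le_antisymm (l2_opNorm_le_of_norm_mulVec_le _ (norm_nonneg A) fun x => ?_)
    (l2_opNorm_le_of_norm_mulVec_le _ (norm_nonneg _) fun u => ?_)
  · rw [hmulVec, norm_toLp_blockSingle]
    conv_rhs => rw [← hslice x, norm_toLp_blockSingle]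
    exact norm_toLp_mulVec_le _ _
  · simpa [hmulVec, norm_toLp_blockSingle] using
      norm_toLp_mulVec_le (A ⊗ₖ (1 : Matrix ο ο ℂ)) (blockSingle default u)

lemma l2_opNorm_kronecker_smul_one {ο : Type*} [Fintype ο] [DecidableEq ο] [Unique ο]
    (A : Matrix κ ι ℂ) (c : ℂ) : ‖A ⊗ₖ (c • 1 : Matrix ο ο ℂ)‖ = ‖c‖ * ‖A‖ := by
  rw [kronecker_smul, norm_smul, l2_opNorm_kronecker_one]

lemma l2_opNorm_kronecker_single_add_le (G1 G2 : Matrix κ ι ℂ) (c : ℂ) :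
    ‖G1 ⊗ₖ single (0 : Fin 2) (1 : Fin 2) c + G2 ⊗ₖ single (1 : Fin 2) (0 : Fin 2) c‖
      ≤ ‖c‖ * max ‖G1‖ ‖G2‖ := by
  refine l2_opNorm_le_of_norm_mulVec_le _ (by positivity) fun x => ?_
  rw [← pow_le_pow_iff_left₀ (norm_nonneg _) (by positivity) two_ne_zero, add_mulVec,
    kronecker_single_mulVec, kronecker_single_mulVec, mul_pow, sq_norm_toLp_prod,
    sq_norm_toLp_prod x, Fin.sum_univ_two, Fin.sum_univ_two]
  simp only [Pi.add_apply, blockSingle_apply, Fin.isValue, if_true, if_false, zero_ne_one,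
    one_ne_zero, add_zero, zero_add]
  set m := max ‖G1‖ ‖G2‖
  have h1 : ‖toLp 2 (G1 *ᵥ fun b => x (b, 1))‖ ≤ m * ‖toLp 2 fun b => x (b, 1)‖ :=
    (norm_toLp_mulVec_le _ _).trans (by gcongr; exact le_max_left _ _)
  have h2 : ‖toLp 2 (G2 *ᵥ fun b => x (b, 0))‖ ≤ m * ‖toLp 2 fun b => x (b, 0)‖ :=
    (norm_toLp_mulVec_le _ _).trans (by gcongr; exact le_max_right _ _)
  simp only [WithLp.toLp_smul, norm_smul]
  calc (‖c‖ * ‖toLp 2 (G1 *ᵥ fun b => x (b, 1))‖) ^ 2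
        + (‖c‖ * ‖toLp 2 (G2 *ᵥ fun b => x (b, 0))‖) ^ 2
      ≤ (‖c‖ * (m * ‖toLp 2 fun b => x (b, 1)‖)) ^ 2
        + (‖c‖ * (m * ‖toLp 2 fun b => x (b, 0)‖)) ^ 2 := by gcongr
    _ = _ := by ring

end KroneckerNorm

section Pencil

lemma blockMat_isHermitian {k : ℕ} {α : Type*} (M : Fin k → Fin k → Matrix α α ℂ)
    (hM : ∀ p q, (M p q)ᴴ = M q p) : (blockMat M).IsHermitian := by
  ext ⟨p, x⟩ ⟨q, y⟩
  simp [blockMat, ← hM q p]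

lemma star_dotProduct_blockMat_mulVec {k : ℕ} {α β : Type*} [Fintype α] [Fintype β]
    (M : Fin k → Fin k → Matrix α β ℂ) (w : Fin k → α → ℂ) (w' : Fin k → β → ℂ) :
    star (Function.uncurry w) ⬝ᵥ blockMat M *ᵥ Function.uncurry w'
      = ∑ p, ∑ q, star (w p) ⬝ᵥ M p q *ᵥ w' q := by
  simp only [dotProduct, mulVec, blockMat, of_apply, Fintype.sum_prod_type, Pi.star_apply,
    Function.uncurry_apply_pair, Finset.mul_sum]
  exact Finset.sum_congr rfl fun p _ => Finset.sum_comm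

lemma re_star_dotProduct_conjTranspose_mulVec {ι κ : Type*} [Fintype ι] [Fintype κ]
    (A : Matrix κ ι ℂ) (u : ι → ℂ) (w : κ → ℂ) :
    (star u ⬝ᵥ Aᴴ *ᵥ w).re = (star w ⬝ᵥ A *ᵥ u).re := by
  rw [dotProduct_mulVec, ← star_mulVec, star_dotProduct, Complex.star_def, Complex.conj_re,
    dotProduct_comm]

variable {s : ℕ} (C1 C2 : Matrix (Fin s) (Fin s) ℂ) {α : Type*} [DecidableEq α]

lemma scrL_isHermitian (X : Matrix α α ℂ × Matrix α α ℂ) : (scrL C1 C2 X).IsHermitian :=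
  blockMat_isHermitian _ fun p q => by fin_cases p <;> fin_cases q <;> simp

lemma re_star_dotProduct_scrL_mulVec [Fintype α] (X : Matrix α α ℂ × Matrix α α ℂ)
    (w : Fin 4 → Fin s × α → ℂ) :
    (star (Function.uncurry w) ⬝ᵥ scrL C1 C2 X *ᵥ Function.uncurry w).re
      = ∑ p, ‖toLp 2 (w p)‖ ^ 2 + 2 * ((star (w 0) ⬝ᵥ (C1 ⊗ₖ X.1) *ᵥ w 1).re
          + (star (w 0) ⬝ᵥ (C2 ⊗ₖ X.2) *ᵥ w 2).re + (star (w 1) ⬝ᵥ (C2 ⊗ₖ X.2) *ᵥ w 3).re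
          + (star (w 2) ⬝ᵥ (C1 ⊗ₖ X.1) *ᵥ w 3).re) := by
  rw [scrL, star_dotProduct_blockMat_mulVec]
  simp [Fin.sum_univ_four, re_star_dotProduct_conjTranspose_mulVec, re_star_dotProduct_self]
  ring

theorem posDef_scrL_of_norm_add_norm_lt_one [Fintype α] (X : Matrix α α ℂ × Matrix α α ℂ)
    (h : ‖C1 ⊗ₖ X.1‖ + ‖C2 ⊗ₖ X.2‖ < 1) : (scrL C1 C2 X).PosDef := by
  refine .of_dotProduct_mulVec_pos (scrL_isHermitian C1 C2 X) fun z hz => RCLike.pos_iff.2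
    ⟨?_, (scrL_isHermitian C1 C2 X).im_star_dotProduct_mulVec_self z⟩
  rw [← Function.uncurry_curry z] at hz ⊢
  set w := Function.curry z
  have hN : 0 < ∑ p, ‖toLp 2 (w p)‖ ^ 2 := by
    rw [← sq_norm_toLp_uncurry]
    exact pow_pos (norm_pos_iff.2 (by simpa using hz)) 2
  rw [RCLike.re_to_complex, re_star_dotProduct_scrL_mulVec]
  have h01 := abs_le.1 (abs_re_star_dotProduct_mulVec_le (C1 ⊗ₖ X.1) (w 0) (w 1))
  have h02 := abs_le.1 (abs_re_star_dotProduct_mulVec_le (C2 ⊗ₖ X.2) (w 0) (w 2))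
  have h13 := abs_le.1 (abs_re_star_dotProduct_mulVec_le (C2 ⊗ₖ X.2) (w 1) (w 3))
  have h23 := abs_le.1 (abs_re_star_dotProduct_mulVec_le (C1 ⊗ₖ X.1) (w 2) (w 3))
  rw [Fin.sum_univ_four] at hN ⊢
  nlinarith [mul_lt_mul_of_pos_right h hN]

end Pencil

section FreeSpectrahedron

variable {s : ℕ} (C1 C2 : Matrix (Fin s) (Fin s) ℂ)

lemma smul_one_zero_mem_freeP {c : ℂ} (hC1 : ‖C1‖ ≤ 1) (hc : ‖c‖ < 1) :
    ((c • 1 : Mat 1), (0 : Mat 1)) ∈ freeP C1 C2 1 :=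
  posDef_scrL_of_norm_add_norm_lt_one C1 C2 _ <| by
    simpa [l2_opNorm_kronecker_smul_one] using
      (mul_le_of_le_one_right (norm_nonneg c) hC1).trans_lt hc

lemma zero_smul_one_mem_freeP {c : ℂ} (hC2 : ‖C2‖ ≤ 1) (hc : ‖c‖ < 1) :
    ((0 : Mat 1), (c • 1 : Mat 1)) ∈ freeP C1 C2 1 :=
  posDef_scrL_of_norm_add_norm_lt_one C1 C2 _ <| by
    simpa [l2_opNorm_kronecker_smul_one] using
      (mul_le_of_le_one_right (norm_nonneg c) hC2).trans_lt hc

theorem single_single_notMem_freeP {t : ℝ} {v : Fin s → ℂ}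
    (hv : ‖toLp 2 v‖ ^ 2 < t ^ 2 * (‖toLp 2 (C1 *ᵥ v)‖ ^ 2 + ‖toLp 2 (C2ᴴ *ᵥ v)‖ ^ 2)) :
    (single 0 1 (t : ℂ), single 1 0 (t : ℂ)) ∉ freeP C1 C2 2 := by
  intro hP
  let w : Fin 4 → Fin s × Fin 2 → ℂ :=
    ![blockSingle 0 (-t • C1 *ᵥ v), blockSingle 1 v, 0, blockSingle 0 (-t • C2ᴴ *ᵥ v)]
  have hQ : (star (Function.uncurry w) ⬝ᵥ
      scrL C1 C2 (single 0 1 (t : ℂ), single 1 0 (t : ℂ)) *ᵥ Function.uncurry w).re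
      = ‖toLp 2 v‖ ^ 2 - t ^ 2 * (‖toLp 2 (C1 *ᵥ v)‖ ^ 2 + ‖toLp 2 (C2ᴴ *ᵥ v)‖ ^ 2) := by
    have hC2 : star v ⬝ᵥ (C2 * C2ᴴ) *ᵥ v = star (C2ᴴ *ᵥ v) ⬝ᵥ C2ᴴ *ᵥ v := by
      rw [← mulVec_mulVec, star_mulVec, conjTranspose_conjTranspose, dotProduct_mulVec]
    rw [re_star_dotProduct_scrL_mulVec]
    simp [w, Fin.sum_univ_four, kronecker_single_mulVec_blockSingle,
      star_blockSingle_dotProduct_blockSingle, norm_toLp_blockSingle, mulVec_neg, mulVec_smul,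
      dotProduct_smul, hC2, re_star_dotProduct_self, norm_smul, mul_pow]
    ring
  have hw : Function.uncurry w ≠ 0 := by
    intro hw
    rw [hw] at hQ
    simp only [star_zero, mulVec_zero, dotProduct_zero, Complex.zero_re] at hQ
    linarith
  exact (hP.re_dotProduct_pos hw).not_gt (by rw [RCLike.re_to_complex, hQ]; linarith)

end FreeSpectrahedron

theorem P_is_not_a_spectraball_general {s : ℕ}
    (C1 C2 : Matrix (Fin s) (Fin s) ℂ) (hnorm1 : ‖C1‖ = 1) (hnorm2 : ‖C2‖ = 1)
    (hinv2 : IsUnit C2) :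
    ¬ ∃ (d e : ℕ), 0 < d ∧ 0 < e ∧
      ∃ (G1 G2 : Matrix (Fin d) (Fin e) ℂ),
        ∀ (n : ℕ) (X : Mat n × Mat n),
          X ∈ freeP C1 C2 n ↔ ‖G1 ⊗ₖ X.1 + G2 ⊗ₖ X.2‖ < 1 := by
  rintro ⟨d, e, -, -, G1, G2, hG⟩
  have hG1 : ‖G1‖ ≤ 1 := le_one_of_forall_mul_lt_one fun r hr0 hr1 => by
    have hr : ‖(r : ℂ)‖ = r := by rw [Complex.norm_real, Real.norm_of_nonneg hr0]
    have := (hG 1 _).1 (smul_one_zero_mem_freeP C1 C2 hnorm1.le (hr.trans_lt hr1))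
    rwa [kronecker_zero, add_zero, l2_opNorm_kronecker_smul_one, hr] at this
  have hG2 : ‖G2‖ ≤ 1 := le_one_of_forall_mul_lt_one fun r hr0 hr1 => by
    have hr : ‖(r : ℂ)‖ = r := by rw [Complex.norm_real, Real.norm_of_nonneg hr0]
    have := (hG 1 _).1 (zero_smul_one_mem_freeP C1 C2 hnorm2.le (hr.trans_lt hr1))
    rwa [kronecker_zero, zero_add, l2_opNorm_kronecker_smul_one, hr] at this
  obtain ⟨v, hv⟩ :=
    exists_sq_norm_lt_sq_norm_mulVec_add C1 C2ᴴ hnorm1.ge ((isUnit_conjTranspose C2).2 hinv2)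
  obtain ⟨t, ⟨ht0, ht1⟩, hvt⟩ := exists_mem_Ioo_lt_sq_mul hv
  refine single_single_notMem_freeP C1 C2 hvt ((hG 2 _).2 ?_)
  calc _ ≤ ‖(t : ℂ)‖ * max ‖G1‖ ‖G2‖ := l2_opNorm_kronecker_single_add_le G1 G2 t
    _ ≤ t * 1 := by
        rw [Complex.norm_real, Real.norm_of_nonneg ht0.le]
        gcongr
        exact max_le hG1 hG2
    _ < 1 := by linarith

/-- Proposition 2.2 (second half): `𝔓` is not a spectraball. -/
theorem P_is_not_a_spectraball {s : ℕ} (hs : 0 < s)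
    (C1 C2 : Matrix (Fin s) (Fin s) ℂ) (hnorm1 : ‖C1‖ = 1) (hnorm2 : ‖C2‖ = 1)
    (hinv1 : IsUnit C1) (hinv2 : IsUnit C2)
    (hgen1 : StarAlgebra.adjoin ℂ ({C1ᴴ * C1, C2ᴴ * C2} : Set (Matrix (Fin s) (Fin s) ℂ)) = ⊤)
    (hgen2 : StarAlgebra.adjoin ℂ ({C1 * C1ᴴ, C2 * C2ᴴ} : Set (Matrix (Fin s) (Fin s) ℂ)) = ⊤) :
    ¬ ∃ (d e : ℕ), 0 < d ∧ 0 < e ∧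
      ∃ (G1 G2 : Matrix (Fin d) (Fin e) ℂ),
        ∀ (n : ℕ) (X : Mat n × Mat n),
          X ∈ freeP C1 C2 n ↔ ‖G1 ⊗ₖ X.1 + G2 ⊗ₖ X.2‖ < 1 :=
  P_is_not_a_spectraball_general C1 C2 hnorm1 hnorm2 hinv2
end
end

section
/- For every n and every X = (X₁,X₂) ∈ Mₙ(ℂ)², the following are equivalent: (i) ‖Λ_R(X)‖ < 1; (ii) ‖Λ_E(X)‖ < 1; (iii) both ‖Λ_{E^r}(X)‖ < 1 and ‖Λ_{E^c}(X)‖ < 1, i.e., both the block-row matrix [C₁⊗X₁ C₂⊗X₂] and the block-column matrix [C₁⊗X₁ ; C₂⊗X₂] have operator norm strictly less than 1. -/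
/-!
After a permutation of rows and columns, `Λ_E(X)` is the block-diagonal matrix with blocks
`Λ_{E^r}(X)` and `Λ_{E^c}(X)`, and `Λ_R(X)` is `Λ_E(X)` bordered by a zero block row and a zero
block column. Permutations preserve the operator norm, and the norm of a block-diagonal matrix is
the larger of the norms of its blocks, so `‖Λ_R(X)‖ = ‖Λ_E(X)‖ = max ‖Λ_{E^r}(X)‖ ‖Λ_{E^c}(X)‖`.
-/

open scoped ComplexOrder Kronecker Matrix Matrix.Norms.L2Operator

noncomputable section

/-- The matrix `R₁`. -/
def Rmat1 {s : ℕ} (C1 : Matrix (Fin s) (Fin s) ℂ) :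
    Matrix (Fin 4 × Fin s) (Fin 4 × Fin s) ℂ :=
  blockMat ![![0, C1, 0, 0], ![0, 0, 0, 0], ![0, 0, 0, C1], ![0, 0, 0, 0]]

/-- The matrix `R₂`. -/
def Rmat2 {s : ℕ} (C2 : Matrix (Fin s) (Fin s) ℂ) :
    Matrix (Fin 4 × Fin s) (Fin 4 × Fin s) ℂ :=
  blockMat ![![0, 0, C2, 0], ![0, 0, 0, C2], ![0, 0, 0, 0], ![0, 0, 0, 0]]

/-- The matrix `E₁`. -/
def Emat1 {s : ℕ} (C1 : Matrix (Fin s) (Fin s) ℂ) :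
    Matrix (Fin 3 × Fin s) (Fin 3 × Fin s) ℂ :=
  blockMat ![![C1, 0, 0], ![0, 0, 0], ![0, 0, C1]]

/-- The matrix `E₂`. -/
def Emat2 {s : ℕ} (C2 : Matrix (Fin s) (Fin s) ℂ) :
    Matrix (Fin 3 × Fin s) (Fin 3 × Fin s) ℂ :=
  blockMat ![![0, C2, 0], ![0, 0, C2], ![0, 0, 0]]

open Function Matrix WithLp

namespace Matrix

variable {𝕜 : Type*} [RCLike 𝕜] {m n p q : Type*} [Fintype m] [Fintype n] [Fintype p] [Fintype q]

lemma l2_opNorm_le_one_of_conjTranspose_mul_self_eq_one [DecidableEq n] {M : Matrix m n 𝕜}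
    (h : Mᴴ * M = 1) : ‖M‖ ≤ 1 := by
  have hsq : ‖M‖ * ‖M‖ ≤ 1 := by
    rw [← l2_opNorm_conjTranspose_mul_self, h, ← diagonal_one, l2_opNorm_diagonal]
    exact (pi_norm_le_iff_of_nonneg zero_le_one).2 fun _ => norm_one.le
  nlinarith [norm_nonneg M]

lemma l2_opNorm_one_submatrix_le [DecidableEq m] {e : p → m} (he : Injective e) :
    ‖(1 : Matrix m m 𝕜).submatrix e id‖ ≤ 1 := by
  classical
  rw [← l2_opNorm_conjTranspose]
  refine l2_opNorm_le_one_of_conjTranspose_mul_self_eq_one ?_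
  rw [conjTranspose_conjTranspose, conjTranspose_submatrix, conjTranspose_one,
    ← submatrix_mul _ _ _ _ _ bijective_id, Matrix.one_mul, submatrix_one _ he]

lemma l2_opNorm_submatrix_le [DecidableEq n] [DecidableEq q] (A : Matrix m n 𝕜) {e : p → m}
    {f : q → n} (he : Injective e) (hf : Injective f) : ‖A.submatrix e f‖ ≤ ‖A‖ := by
  classical
  have hfactor : A.submatrix e f =
      (1 : Matrix m m 𝕜).submatrix e id * A * ((1 : Matrix n n 𝕜).submatrix f id)ᴴ := by
    ext i j
    simp [mul_apply, one_apply]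
  calc ‖A.submatrix e f‖
      ≤ ‖(1 : Matrix m m 𝕜).submatrix e id‖ * ‖A‖ * ‖((1 : Matrix n n 𝕜).submatrix f id)ᴴ‖ := by
        rw [hfactor]
        exact (l2_opNorm_mul _ _).trans
          (mul_le_mul_of_nonneg_right (l2_opNorm_mul _ _) (norm_nonneg _))
    _ ≤ 1 * ‖A‖ * 1 := by
        rw [l2_opNorm_conjTranspose]
        gcongr
        exacts [l2_opNorm_one_submatrix_le he, l2_opNorm_one_submatrix_le hf]
    _ = ‖A‖ := by ring

lemma l2_opNorm_submatrix_equiv [DecidableEq n] [DecidableEq q] (A : Matrix m n 𝕜) (e : p ≃ m)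
    (f : q ≃ n) : ‖A.submatrix e f‖ = ‖A‖ :=
  le_antisymm (A.l2_opNorm_submatrix_le e.injective f.injective) <| by
    simpa using (A.submatrix e f).l2_opNorm_submatrix_le e.symm.injective f.symm.injective

lemma sum_norm_mulVec_sq_le [DecidableEq n] (A : Matrix m n 𝕜) (x : n → 𝕜) :
    ∑ i, ‖(A *ᵥ x) i‖ ^ 2 ≤ ‖A‖ ^ 2 * ∑ j, ‖x j‖ ^ 2 := by
  have h := pow_le_pow_left₀ (norm_nonneg _) (A.l2_opNorm_mulVec (toLp 2 x)) 2
  rwa [mul_pow, EuclideanSpace.norm_sq_eq, EuclideanSpace.norm_sq_eq] at h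

lemma l2_opNorm_fromBlocks_zero_zero_le [DecidableEq n] [DecidableEq q] (M : Matrix m n 𝕜)
    (N : Matrix p q 𝕜) : ‖fromBlocks M 0 0 N‖ ≤ max ‖M‖ ‖N‖ := by
  rw [l2_opNorm_def]
  refine ContinuousLinearMap.opNorm_le_bound _ (by positivity) fun x => ?_
  change ‖toLp 2 (fromBlocks M 0 0 N *ᵥ ofLp x)‖ ≤ _
  refine (sq_le_sq₀ (norm_nonneg _) (by positivity)).mp ?_
  rw [mul_pow, EuclideanSpace.norm_sq_eq, EuclideanSpace.norm_sq_eq]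
  simp only [Fintype.sum_sum_type, mul_add, fromBlocks_mulVec, Sum.elim_inl, Sum.elim_inr,
    zero_mulVec, add_zero, zero_add]
  refine add_le_add ((sum_norm_mulVec_sq_le M _).trans ?_) ((sum_norm_mulVec_sq_le N _).trans ?_)
  · exact mul_le_mul_of_nonneg_right (by gcongr; exact le_max_left _ _) (by positivity)
  · exact mul_le_mul_of_nonneg_right (by gcongr; exact le_max_right _ _) (by positivity)

lemma l2_opNorm_fromBlocks_zero_zero [DecidableEq n] [DecidableEq q] (M : Matrix m n 𝕜)
    (N : Matrix p q 𝕜) : ‖fromBlocks M 0 0 N‖ = max ‖M‖ ‖N‖ :=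
  le_antisymm (l2_opNorm_fromBlocks_zero_zero_le M N) <| max_le
    (calc ‖M‖ = ‖(fromBlocks M 0 0 N).submatrix Sum.inl Sum.inl‖ := by congr 1
      _ ≤ _ := l2_opNorm_submatrix_le _ Sum.inl_injective Sum.inl_injective)
    (calc ‖N‖ = ‖(fromBlocks M 0 0 N).submatrix Sum.inr Sum.inr‖ := by congr 1
      _ ≤ _ := l2_opNorm_submatrix_le _ Sum.inr_injective Sum.inr_injective)

variable {R α β γ δ ι : Type*} [NonUnitalNonAssocSemiring R]

lemma fromCols_kronecker_add_fromCols_kronecker (C : Matrix α β R) (D : Matrix α γ R)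
    (X Y : Matrix δ ι R) :
    fromCols C 0 ⊗ₖ X + fromCols 0 D ⊗ₖ Y =
      (fromCols (C ⊗ₖ X) (D ⊗ₖ Y)).submatrix (Equiv.refl (α × δ)) (Equiv.sumProdDistrib β γ ι) := by
  ext ⟨i, k⟩ ⟨j | j, l⟩ <;> simp

lemma fromRows_kronecker_add_fromRows_kronecker (C : Matrix α γ R) (D : Matrix β γ R)
    (X Y : Matrix δ ι R) :
    fromRows C 0 ⊗ₖ X + fromRows 0 D ⊗ₖ Y =
      (fromRows (C ⊗ₖ X) (D ⊗ₖ Y)).submatrix (Equiv.sumProdDistrib α β δ)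
        (Equiv.refl (γ × ι)) := by
  ext ⟨i | i, k⟩ ⟨j, l⟩ <;> simp

end Matrix

/- In block form `Λ_E(X) = [[A, B, 0], [0, 0, B], [0, 0, A]]` with `A = C₁ ⊗ X₁`, `B = C₂ ⊗ X₂`:
block row 0 meets block columns 0, 1 in `[A B]`, and block column 2 meets block rows 2, 1 in
`[A; B]`. -/
def rowEquivE (α β : Type*) : (Fin 3 × α) × β ≃ (α × β) ⊕ ((α × β) ⊕ (α × β)) where
  toFun p := ![.inl (p.1.2, p.2), .inr (.inr (p.1.2, p.2)), .inr (.inl (p.1.2, p.2))] p.1.1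
  invFun := Sum.elim (fun ik => ((0, ik.1), ik.2))
    (Sum.elim (fun ik => ((2, ik.1), ik.2)) (fun ik => ((1, ik.1), ik.2)))
  left_inv := by rintro ⟨⟨a, i⟩, k⟩; fin_cases a <;> rfl
  right_inv := by rintro (⟨i, k⟩ | ⟨i, k⟩ | ⟨i, k⟩) <;> rfl

def colEquivE (α β : Type*) : (Fin 3 × α) × β ≃ ((α × β) ⊕ (α × β)) ⊕ (α × β) where
  toFun p := ![.inl (.inl (p.1.2, p.2)), .inl (.inr (p.1.2, p.2)), .inr (p.1.2, p.2)] p.1.1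
  invFun := Sum.elim (Sum.elim (fun jl => ((0, jl.1), jl.2)) (fun jl => ((1, jl.1), jl.2)))
    (fun jl => ((2, jl.1), jl.2))
  left_inv := by rintro ⟨⟨a, i⟩, k⟩; fin_cases a <;> rfl
  right_inv := by rintro ((⟨i, k⟩ | ⟨i, k⟩) | ⟨i, k⟩) <;> rfl

def rowEquivR (α β : Type*) : (Fin 4 × α) × β ≃ ((Fin 3 × α) × β) ⊕ (α × β) where
  toFun p := ![.inl ((0, p.1.2), p.2), .inl ((1, p.1.2), p.2), .inl ((2, p.1.2), p.2),
    .inr (p.1.2, p.2)] p.1.1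
  invFun := Sum.elim (fun p => ((p.1.1.castSucc, p.1.2), p.2)) (fun ik => ((3, ik.1), ik.2))
  left_inv := by rintro ⟨⟨a, i⟩, k⟩; fin_cases a <;> rfl
  right_inv := by rintro (⟨⟨a, i⟩, k⟩ | ⟨i, k⟩) <;> [fin_cases a <;> rfl; rfl]

def colEquivR (α β : Type*) : (Fin 4 × α) × β ≃ ((Fin 3 × α) × β) ⊕ (α × β) where
  toFun p := ![.inr (p.1.2, p.2), .inl ((0, p.1.2), p.2), .inl ((1, p.1.2), p.2),
    .inl ((2, p.1.2), p.2)] p.1.1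
  invFun := Sum.elim (fun p => ((p.1.1.succ, p.1.2), p.2)) (fun ik => ((0, ik.1), ik.2))
  left_inv := by rintro ⟨⟨a, i⟩, k⟩; fin_cases a <;> rfl
  right_inv := by rintro (⟨⟨a, i⟩, k⟩ | ⟨i, k⟩) <;> [fin_cases a <;> rfl; rfl]

section

variable {s : ℕ} {α β γ : Type*}

lemma blockMat_apply {k : ℕ} (M : Fin k → Fin k → Matrix α β ℂ) (a b : Fin k) (i : α) (j : β) :
    blockMat M (a, i) (b, j) = M a b i j :=
  rfl

lemma Emat_kronecker_eq_submatrix_fromBlocks (C1 C2 : Matrix (Fin s) (Fin s) ℂ)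
    (X1 X2 : Matrix β γ ℂ) :
    Emat1 C1 ⊗ₖ X1 + Emat2 C2 ⊗ₖ X2 =
      (fromBlocks (fromCols (C1 ⊗ₖ X1) (C2 ⊗ₖ X2)) 0 0
        (fromRows (C1 ⊗ₖ X1) (C2 ⊗ₖ X2))).submatrix
        (rowEquivE (Fin s) β) (colEquivE (Fin s) γ) := by
  ext ⟨⟨a, i⟩, k⟩ ⟨⟨b, j⟩, l⟩
  fin_cases a <;> fin_cases b <;>
    simp only [Emat1, Emat2, rowEquivE, colEquivE, Matrix.add_apply, kroneckerMap_apply,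
      blockMat_apply, Equiv.coe_fn_mk, submatrix_apply, Fin.zero_eta, Fin.mk_one, Fin.reduceFinMk,
      cons_val, Matrix.zero_apply, zero_mul, zero_add, add_zero, fromBlocks_apply₁₁,
      fromBlocks_apply₁₂, fromBlocks_apply₂₁, fromBlocks_apply₂₂, fromCols_apply_inl,
      fromCols_apply_inr, fromRows_apply_inl, fromRows_apply_inr]

lemma Rmat_kronecker_eq_submatrix_fromBlocks (C1 C2 : Matrix (Fin s) (Fin s) ℂ)
    (X1 X2 : Matrix β γ ℂ) :
    Rmat1 C1 ⊗ₖ X1 + Rmat2 C2 ⊗ₖ X2 =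
      (fromBlocks (Emat1 C1 ⊗ₖ X1 + Emat2 C2 ⊗ₖ X2) 0 0
        (0 : Matrix (Fin s × β) (Fin s × γ) ℂ)).submatrix
        (rowEquivR (Fin s) β) (colEquivR (Fin s) γ) := by
  ext ⟨⟨a, i⟩, k⟩ ⟨⟨b, j⟩, l⟩
  fin_cases a <;> fin_cases b <;>
    simp only [Emat1, Emat2, Rmat1, Rmat2, rowEquivR, colEquivR, Matrix.add_apply,
      kroneckerMap_apply, blockMat_apply, Equiv.coe_fn_mk, submatrix_apply, Fin.zero_eta,
      Fin.mk_one, Fin.reduceFinMk, cons_val, Matrix.zero_apply, zero_mul, zero_add, add_zero,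
      fromBlocks_apply₁₁, fromBlocks_apply₁₂, fromBlocks_apply₂₁, fromBlocks_apply₂₂]

end

theorem ball_R_eq_ball_E_eq_inter_general {s : ℕ}
    (C1 C2 : Matrix (Fin s) (Fin s) ℂ) {n : ℕ} (X : Mat n × Mat n) :
    [‖Rmat1 C1 ⊗ₖ X.1 + Rmat2 C2 ⊗ₖ X.2‖ < 1,
      ‖Emat1 C1 ⊗ₖ X.1 + Emat2 C2 ⊗ₖ X.2‖ < 1,
      (‖Matrix.fromCols C1 0 ⊗ₖ X.1 + Matrix.fromCols 0 C2 ⊗ₖ X.2‖ < 1 ∧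
        ‖Matrix.fromRows C1 0 ⊗ₖ X.1 + Matrix.fromRows 0 C2 ⊗ₖ X.2‖ < 1)].TFAE := by
  have hRow : ‖fromCols C1 0 ⊗ₖ X.1 + fromCols 0 C2 ⊗ₖ X.2‖ =
      ‖fromCols (C1 ⊗ₖ X.1) (C2 ⊗ₖ X.2)‖ := by
    rw [fromCols_kronecker_add_fromCols_kronecker, l2_opNorm_submatrix_equiv]
  have hCol : ‖fromRows C1 0 ⊗ₖ X.1 + fromRows 0 C2 ⊗ₖ X.2‖ =
      ‖fromRows (C1 ⊗ₖ X.1) (C2 ⊗ₖ X.2)‖ := by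
    rw [fromRows_kronecker_add_fromRows_kronecker, l2_opNorm_submatrix_equiv]
  have hE : ‖Emat1 C1 ⊗ₖ X.1 + Emat2 C2 ⊗ₖ X.2‖ =
      max ‖fromCols (C1 ⊗ₖ X.1) (C2 ⊗ₖ X.2)‖ ‖fromRows (C1 ⊗ₖ X.1) (C2 ⊗ₖ X.2)‖ := by
    rw [Emat_kronecker_eq_submatrix_fromBlocks, l2_opNorm_submatrix_equiv,
      l2_opNorm_fromBlocks_zero_zero]
  have hR : ‖Rmat1 C1 ⊗ₖ X.1 + Rmat2 C2 ⊗ₖ X.2‖ = ‖Emat1 C1 ⊗ₖ X.1 + Emat2 C2 ⊗ₖ X.2‖ := by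
    rw [Rmat_kronecker_eq_submatrix_fromBlocks, l2_opNorm_submatrix_equiv,
      l2_opNorm_fromBlocks_zero_zero, norm_zero, max_eq_left (norm_nonneg _)]
  rw [hR, hE, hRow, hCol]
  tfae_have 1 ↔ 2 := Iff.rfl
  tfae_have 2 ↔ 3 := max_lt_iff
  tfae_finish

/-- Proposition 2.6 (first part): `𝓑_R = 𝓑_E = 𝓑_{E^r} ∩ 𝓑_{E^c}`. -/
theorem ball_R_eq_ball_E_eq_inter {s : ℕ} (hs : 0 < s)
    (C1 C2 : Matrix (Fin s) (Fin s) ℂ) {n : ℕ} (X : Mat n × Mat n) :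
    [‖Rmat1 C1 ⊗ₖ X.1 + Rmat2 C2 ⊗ₖ X.2‖ < 1,
      ‖Emat1 C1 ⊗ₖ X.1 + Emat2 C2 ⊗ₖ X.2‖ < 1,
      (‖Matrix.fromCols C1 0 ⊗ₖ X.1 + Matrix.fromCols 0 C2 ⊗ₖ X.2‖ < 1 ∧
        ‖Matrix.fromRows C1 0 ⊗ₖ X.1 + Matrix.fromRows 0 C2 ⊗ₖ X.2‖ < 1)].TFAE :=
  ball_R_eq_ball_E_eq_inter_general C1 C2 X
end
end

section
/- Suppose C₁, C₂ ∈ M_s(ℂ) are invertible, b = (b₁,b₂) ∈ ℂ² is such that B₀ := ℒ(b₁,b₂) ∈ M_{4s}(ℂ) is positive definite, 𝔏 = (ℓ_{j,k}) ∈ M₂(ℂ) is invertible, Y_j = ℓ_{1,j}R₁ + ℓ_{2,j}R₂ for j = 1,2, and P, Q ∈ M_{4s}(ℂ) satisfy PP* = B₀ = QQ* and Y_j = P · diag(E_j, 0_{s×s}) · Q* for j = 1, 2 (diag(E_j, 0) being the 4s×4s block-diagonal matrix with E_j in the upper-left 3s×3s corner). Write P = (P_{i,k}) and Q = (Q_{i,k})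 as 4×4 block matrices with s×s blocks. Then: Q_{1,4} and P_{4,4} are unitary; Q_{4,3} and P_{1,1} are invertible; and, with T = (Q_{4,3}*)^{−1} and S' = (P_{1,1}*)^{−1}: P_{1,4} = 0; P_{2,1} = P_{3,1} = P_{4,1} = P_{4,2} = P_{4,3} = 0; P_{2,2} = ℓ_{2,2}C₂TC₂^{−1}; P_{2,3} = ℓ_{2,1}C₂TC₁^{−1}; P_{2,4} = b₂C₂P_{4,4}; P_{3,2} = ℓ_{1,2}C₁TC₂^{−1}; P_{3,3} = ℓ_{1,1}C₁TC₁^{−1}; P_{3,4} = b₁C₁P_{4,4}; and Q_{1,1} = Q_{1,2} = Q_{1,3} = 0; Q_{2,3} = Q_{3,3} = Q_{4,4} = 0; Q_{2,1} = conj(ℓ_{1,1})·C₁*S'(C₁*)^{−1}; Q_{2,2} = conj(ℓ_{1,2})·C₁*S'(C₂*)^{−1}; Q_{2,4} = conj(b₁)·C₁*Q_{1,4}; Q_{3,1} = conj(ℓ_{2,1})·C₂*S'(C₁*)^{−1}; Q_{3,2} = conj(ℓ_{2,2})·C₂*S'(C₂*)^{−1}; Q_{3,4} = conj(b₂)·C₂*Q_{1,4}.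 -/
open scoped ComplexOrder Kronecker Matrix Matrix.Norms.L2Operator

noncomputable section

/-- `ℒ(z₁, z₂)` at level one, as a `4s × 4s` matrix. -/
def scrL1 {s : ℕ} (C1 C2 : Matrix (Fin s) (Fin s) ℂ) (z1 z2 : ℂ) :
    Matrix (Fin 4 × Fin s) (Fin 4 × Fin s) ℂ :=
  blockMat ![![1, z1 • C1, z2 • C2, 0],
             ![(z1 • C1)ᴴ, 1, 0, z2 • C2],
             ![(z2 • C2)ᴴ, 0, 1, z1 • C1],
             ![0, (z2 • C2)ᴴ, (z1 • C1)ᴴ, 1]]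

/-- The `(i, k)` block of a `4 × 4` block matrix with `s × s` blocks. -/
def blk {s : ℕ} (M : Matrix (Fin 4 × Fin s) (Fin 4 × Fin s) ℂ) (i k : Fin 4) :
    Matrix (Fin s) (Fin s) ℂ :=
  Matrix.of fun a b => M (i, a) (k, b)

/-!
`P` and `Q` are invertible because `P P* = Q Q* = B₀` is. Hence a vanishing block column (row) of
`Y_j = P diag(E_j, 0) Q*` is also one of `diag(E_j, 0) Q*` (resp. of `P diag(E_j, 0)`). Applied to the `Y_j` and to
`ℓ₂₂ Y₁ - ℓ₂₁ Y₂ = det 𝔏 • R₁` and `ℓ₁₁ Y₂ - ℓ₁₂ Y₁ = det 𝔏 • R₂`, and using that the `C_j` are invertible and that no row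
of `𝔏` vanishes, this kills the first block row of `Q` and the last block row of `P` except their last blocks, the third
block column of `Q` except `Q₄₃`, and the first block column of `P` except `P₁₁`. A block alone in its block column of an
invertible matrix is invertible; a block `U` alone in its block row of `A` with `A A* = B₀` has `U U* = 1`, and then
`A A* = B₀` gives the rest of the block column of `U`. The remaining blocks are read off single blocks of the `Y_j`.
-/

section Blocks

variable {s : ℕ} {A B X : Matrix (Fin 4 × Fin s) (Fin 4 × Fin s) ℂ}

lemma blk_mul (i k : Fin 4) :
    blk (A * B) i k = ∑ j, blk A i j * blk B j k := by
  ext a b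
  simp only [blk, Matrix.mul_apply, Fintype.sum_prod_type, Matrix.sum_apply, Matrix.of_apply]

lemma blk_conjTranspose (i k : Fin 4) :
    blk Aᴴ i k = (blk A k i)ᴴ := rfl

@[simp] lemma blk_blockMat (M : Fin 4 → Fin 4 → Matrix (Fin s) (Fin s) ℂ) (i k : Fin 4) :
    blk (blockMat M) i k = M i k := rfl

@[simp] lemma blk_add (i k : Fin 4) : blk (A + B) i k = blk A i k + blk B i k := rfl

@[simp] lemma blk_sub (i k : Fin 4) : blk (A - B) i k = blk A i k - blk B i k := rfl

@[simp] lemma blk_smul (c : ℂ) (i k : Fin 4) : blk (c • A) i k = c • blk A i k := rfl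

lemma blk_one_self (i : Fin 4) : blk (1 : Matrix (Fin 4 × Fin s) (Fin 4 × Fin s) ℂ) i i = 1 := by
  ext a b
  simp [blk, Matrix.one_apply]

lemma blk_eq_zero_of_isUnit_mul (hA : IsUnit A) {k : Fin 4} (h : ∀ i, blk (A * X) i k = 0)
    (i : Fin 4) : blk X i k = 0 := by
  rw [← Matrix.nonsing_inv_mul_cancel_left A X ((Matrix.isUnit_iff_isUnit_det A).mp hA), blk_mul]
  simp [h]

lemma blk_eq_zero_of_mul_isUnit (hA : IsUnit A) {i : Fin 4} (h : ∀ k, blk (X * A) i k = 0)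
    (k : Fin 4) : blk X i k = 0 := by
  rw [← Matrix.mul_nonsing_inv_cancel_right A X ((Matrix.isUnit_iff_isUnit_det A).mp hA), blk_mul]
  simp [h]

lemma isUnit_blk_of_col (hA : IsUnit A) {i₀ k : Fin 4} (h : ∀ i ≠ i₀, blk A i k = 0) :
    IsUnit (blk A i₀ k) := by
  have hinv : blk (A⁻¹ * A) k k = 1 := by
    rw [Matrix.nonsing_inv_mul A ((Matrix.isUnit_iff_isUnit_det A).mp hA), blk_one_self]
  rw [blk_mul, Finset.sum_eq_single i₀ (fun i _ hi => by rw [h i hi, mul_zero]) (by simp)] at hinv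
  exact (Matrix.isUnit_iff_isUnit_det _).mpr (Matrix.isUnit_det_of_left_inverse hinv)

lemma blk_mul_conjTranspose_of_row {i k : Fin 4} (h : ∀ j ≠ k, blk A i j = 0) (i' : Fin 4) :
    blk (A * Aᴴ) i' i = blk A i' k * (blk A i k)ᴴ := by
  rw [blk_mul, Finset.sum_eq_single k (fun j _ hj => by rw [blk_conjTranspose, h j hj,
    Matrix.conjTranspose_zero, mul_zero]) (by simp), blk_conjTranspose]

lemma blk_mem_unitaryGroup_of_row (hAB : A * Aᴴ = B) {i k : Fin 4}
    (hrow : ∀ j ≠ k, blk A i j = 0) (hB : blk B i i = 1) :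
    blk A i k ∈ Matrix.unitaryGroup (Fin s) ℂ := by
  rw [Matrix.mem_unitaryGroup_iff, Matrix.star_eq_conjTranspose,
    ← blk_mul_conjTranspose_of_row hrow, hAB, hB]

lemma blk_eq_mul_of_row (hAB : A * Aᴴ = B) {i k : Fin 4} (hrow : ∀ j ≠ k, blk A i j = 0)
    (hB : blk B i i = 1) (i' : Fin 4) : blk A i' k = blk B i' i * blk A i k := by
  have hU := Matrix.mem_unitaryGroup_iff'.mp (blk_mem_unitaryGroup_of_row hAB hrow hB)
  rw [Matrix.star_eq_conjTranspose] at hU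
  rw [← hAB, blk_mul_conjTranspose_of_row hrow, mul_assoc, hU, mul_one]

end Blocks

lemma Matrix.fin_two_row_ne_zero_of_isUnit {R : Type*} [CommRing R] [Nontrivial R]
    {ℓ : Matrix (Fin 2) (Fin 2) R} (hℓ : IsUnit ℓ) (r : Fin 2) : ℓ r 0 ≠ 0 ∨ ℓ r 1 ≠ 0 := by
  by_contra! h
  exact ((Matrix.isUnit_iff_isUnit_det ℓ).mp hℓ).ne_zero
    (Matrix.det_eq_zero_of_row_eq_zero r fun j => by fin_cases j <;> simp [h])

lemma Matrix.isUnit_of_posDef_mul_conjTranspose {n 𝕜 : Type*} [Fintype n] [DecidableEq n]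
    [RCLike 𝕜] {A : Matrix n n 𝕜} (hA : (A * Aᴴ).PosDef) : IsUnit A := by
  have h := (Matrix.isUnit_iff_isUnit_det _).mp hA.isUnit
  rw [Matrix.det_mul] at h
  exact (Matrix.isUnit_iff_isUnit_det A).mpr (isUnit_of_mul_isUnit_left h)

lemma Matrix.eq_smul_mul_inv_mul_inv {n 𝕜 : Type*} [Fintype n] [DecidableEq n] [Field 𝕜]
    {A B X S : Matrix n n 𝕜} (hA : IsUnit A) (hB : IsUnit B) {c : 𝕜} (h : X * A * B = c • S) :
    X = c • (S * B⁻¹ * A⁻¹) := by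
  rw [Matrix.isUnit_iff_isUnit_det] at hA hB
  rw [← Matrix.mul_nonsing_inv_cancel_right A X hA,
    ← Matrix.mul_nonsing_inv_cancel_right B (X * A) hB, h, Matrix.smul_mul, Matrix.smul_mul]

lemma Matrix.eq_star_smul_of_mul_mul_conjTranspose {n 𝕜 : Type*} [Fintype n] [DecidableEq n]
    [Field 𝕜] [StarRing 𝕜] {A B X S : Matrix n n 𝕜} (hA : IsUnit A) (hB : IsUnit B) {c : 𝕜}
    (h : A * B * Xᴴ = c • S) : X = star c • (Sᴴ * (Aᴴ)⁻¹ * (Bᴴ)⁻¹) := by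
  have h' := congrArg Matrix.conjTranspose h
  rw [Matrix.conjTranspose_mul, Matrix.conjTranspose_mul, Matrix.conjTranspose_conjTranspose,
    ← mul_assoc, Matrix.conjTranspose_smul] at h'
  exact Matrix.eq_smul_mul_inv_mul_inv ((Matrix.isUnit_conjTranspose B).mpr hB)
    ((Matrix.isUnit_conjTranspose A).mpr hA) h'

section Factorization

variable {s : ℕ}

/-- `diag(E₁, 0)`. -/
def diagE1 (C1 : Mat s) : Matrix (Fin 4 × Fin s) (Fin 4 × Fin s) ℂ :=
  blockMat ![![C1, 0, 0, 0], ![0, 0, 0, 0], ![0, 0, C1, 0], ![0, 0, 0, 0]]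

/-- `diag(E₂, 0)`. -/
def diagE2 (C2 : Mat s) : Matrix (Fin 4 × Fin s) (Fin 4 × Fin s) ℂ :=
  blockMat ![![0, C2, 0, 0], ![0, 0, C2, 0], ![0, 0, 0, 0], ![0, 0, 0, 0]]

lemma blk_mul_diagE1_mul (P Q : Matrix (Fin 4 × Fin s) (Fin 4 × Fin s) ℂ) (C : Mat s)
    (i k : Fin 4) :
    blk (P * diagE1 C * Qᴴ) i k = blk P i 0 * C * (blk Q k 0)ᴴ + blk P i 2 * C * (blk Q k 2)ᴴ := by
  simp [blk_mul, Fin.sum_univ_four, diagE1, blk_conjTranspose]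

lemma blk_mul_diagE2_mul (P Q : Matrix (Fin 4 × Fin s) (Fin 4 × Fin s) ℂ) (C : Mat s)
    (i k : Fin 4) :
    blk (P * diagE2 C * Qᴴ) i k = blk P i 0 * C * (blk Q k 1)ᴴ + blk P i 1 * C * (blk Q k 2)ᴴ := by
  simp [blk_mul, Fin.sum_univ_four, diagE2, blk_conjTranspose]

structure FactorPair (C1 C2 : Mat s) (b1 b2 : ℂ) (ℓ : Matrix (Fin 2) (Fin 2) ℂ)
    (P Q : Matrix (Fin 4 × Fin s) (Fin 4 × Fin s) ℂ) : Prop where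
  isUnit_C1 : IsUnit C1
  isUnit_C2 : IsUnit C2
  isUnit_ℓ : IsUnit ℓ
  isUnit_P : IsUnit P
  isUnit_Q : IsUnit Q
  mul_conjTranspose_P : P * Pᴴ = scrL1 C1 C2 b1 b2
  mul_conjTranspose_Q : Q * Qᴴ = scrL1 C1 C2 b1 b2
  Y1_eq : ℓ 0 0 • Rmat1 C1 + ℓ 1 0 • Rmat2 C2 = P * diagE1 C1 * Qᴴ
  Y2_eq : ℓ 0 1 • Rmat1 C1 + ℓ 1 1 • Rmat2 C2 = P * diagE2 C2 * Qᴴ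

-- Block indices are `0`-based: `blk P 1 2` is `P₂,₃`, and `P12_eq` is about it.
namespace FactorPair

variable {C1 C2 : Mat s} {b1 b2 : ℂ} {ℓ : Matrix (Fin 2) (Fin 2) ℂ}
  {P Q : Matrix (Fin 4 × Fin s) (Fin 4 × Fin s) ℂ}

lemma Q_row_zero (h : FactorPair C1 C2 b1 b2 ℓ P Q) : ∀ j ≠ 3, blk Q 0 j = 0 := by
  have hE1 : ∀ i, blk (diagE1 C1 * Qᴴ) i 0 = 0 := blk_eq_zero_of_isUnit_mul h.isUnit_P fun i => by
    rw [← mul_assoc, ← h.Y1_eq]; fin_cases i <;> simp [Rmat1, Rmat2]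
  have hE2 : ∀ i, blk (diagE2 C2 * Qᴴ) i 0 = 0 := blk_eq_zero_of_isUnit_mul h.isUnit_P fun i => by
    rw [← mul_assoc, ← h.Y2_eq]; fin_cases i <;> simp [Rmat1, Rmat2]
  intro j hj
  fin_cases j
  · simpa [blk_mul, Fin.sum_univ_four, diagE1, blk_conjTranspose,
      h.isUnit_C1.mul_right_eq_zero] using hE1 0
  · simpa [blk_mul, Fin.sum_univ_four, diagE2, blk_conjTranspose,
      h.isUnit_C2.mul_right_eq_zero] using hE2 0
  · simpa [blk_mul, Fin.sum_univ_four, diagE1, blk_conjTranspose,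
      h.isUnit_C1.mul_right_eq_zero] using hE1 2
  · exact absurd rfl hj

lemma P_row_zero (h : FactorPair C1 C2 b1 b2 ℓ P Q) : ∀ j ≠ 3, blk P 3 j = 0 := by
  have hQ := (Matrix.isUnit_conjTranspose Q).mpr h.isUnit_Q
  have hE1 : ∀ k, blk (P * diagE1 C1) 3 k = 0 := blk_eq_zero_of_mul_isUnit hQ fun k => by
    rw [← h.Y1_eq]; fin_cases k <;> simp [Rmat1, Rmat2]
  have hE2 : ∀ k, blk (P * diagE2 C2) 3 k = 0 := blk_eq_zero_of_mul_isUnit hQ fun k => by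
    rw [← h.Y2_eq]; fin_cases k <;> simp [Rmat1, Rmat2]
  intro j hj
  fin_cases j
  · simpa [blk_mul, Fin.sum_univ_four, diagE1, h.isUnit_C1.mul_left_eq_zero] using hE1 0
  · simpa [blk_mul, Fin.sum_univ_four, diagE2, h.isUnit_C2.mul_left_eq_zero] using hE2 2
  · simpa [blk_mul, Fin.sum_univ_four, diagE1, h.isUnit_C1.mul_left_eq_zero] using hE1 2
  · exact absurd rfl hj

lemma mul_sub_mul_eq_det_smul_Rmat1 (h : FactorPair C1 C2 b1 b2 ℓ P Q) :
    P * (ℓ 1 1 • diagE1 C1 - ℓ 1 0 • diagE2 C2) * Qᴴ = ℓ.det • Rmat1 C1 := by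
  rw [Matrix.mul_sub, Matrix.sub_mul, Matrix.mul_smul, Matrix.mul_smul, Matrix.smul_mul,
    Matrix.smul_mul, ← h.Y1_eq, ← h.Y2_eq, Matrix.det_fin_two]
  module

lemma mul_sub_mul_eq_det_smul_Rmat2 (h : FactorPair C1 C2 b1 b2 ℓ P Q) :
    P * (ℓ 0 0 • diagE2 C2 - ℓ 0 1 • diagE1 C1) * Qᴴ = ℓ.det • Rmat2 C2 := by
  rw [Matrix.mul_sub, Matrix.sub_mul, Matrix.mul_smul, Matrix.mul_smul, Matrix.smul_mul,
    Matrix.smul_mul, ← h.Y1_eq, ← h.Y2_eq, Matrix.det_fin_two]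
  module

lemma Q_col_zero (h : FactorPair C1 C2 b1 b2 ℓ P Q) : ∀ i ≠ 3, blk Q i 2 = 0 := by
  have hZ1 : ∀ i, blk ((ℓ 1 1 • diagE1 C1 - ℓ 1 0 • diagE2 C2) * Qᴴ) i 2 = 0 :=
    blk_eq_zero_of_isUnit_mul h.isUnit_P fun i => by
      rw [← mul_assoc, h.mul_sub_mul_eq_det_smul_Rmat1]; fin_cases i <;> simp [Rmat1]
  have hZ2 : ∀ i, blk ((ℓ 0 0 • diagE2 C2 - ℓ 0 1 • diagE1 C1) * Qᴴ) i 1 = 0 :=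
    blk_eq_zero_of_isUnit_mul h.isUnit_P fun i => by
      rw [← mul_assoc, h.mul_sub_mul_eq_det_smul_Rmat2]; fin_cases i <;> simp [Rmat2]
  intro i hi
  fin_cases i
  · exact h.Q_row_zero 2 (by decide)
  · have h0 : ℓ 0 0 = 0 ∨ blk Q 1 2 = 0 := by
      simpa [blk_mul, Fin.sum_univ_four, diagE1, diagE2, blk_conjTranspose,
        h.isUnit_C1.mul_right_eq_zero, h.isUnit_C2.mul_right_eq_zero] using hZ2 1
    have h1 : ℓ 0 1 = 0 ∨ blk Q 1 2 = 0 := by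
      simpa [blk_mul, Fin.sum_univ_four, diagE1, diagE2, blk_conjTranspose,
        h.isUnit_C1.mul_right_eq_zero, h.isUnit_C2.mul_right_eq_zero] using hZ2 2
    have := Matrix.fin_two_row_ne_zero_of_isUnit h.isUnit_ℓ 0
    tauto
  · have h0 : ℓ 1 0 = 0 ∨ blk Q 2 2 = 0 := by
      simpa [blk_mul, Fin.sum_univ_four, diagE1, diagE2, blk_conjTranspose,
        h.isUnit_C1.mul_right_eq_zero, h.isUnit_C2.mul_right_eq_zero] using hZ1 1
    have h1 : ℓ 1 1 = 0 ∨ blk Q 2 2 = 0 := by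
      simpa [blk_mul, Fin.sum_univ_four, diagE1, diagE2, blk_conjTranspose,
        h.isUnit_C1.mul_right_eq_zero, h.isUnit_C2.mul_right_eq_zero] using hZ1 2
    have := Matrix.fin_two_row_ne_zero_of_isUnit h.isUnit_ℓ 1
    tauto
  · exact absurd rfl hi

lemma P_col_zero (h : FactorPair C1 C2 b1 b2 ℓ P Q) : ∀ i ≠ 0, blk P i 0 = 0 := by
  have hQ := (Matrix.isUnit_conjTranspose Q).mpr h.isUnit_Q
  have hZ1 : ∀ k, blk (P * (ℓ 1 1 • diagE1 C1 - ℓ 1 0 • diagE2 C2)) 1 k = 0 :=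
    blk_eq_zero_of_mul_isUnit hQ fun k => by
      rw [h.mul_sub_mul_eq_det_smul_Rmat1]; fin_cases k <;> simp [Rmat1]
  have hZ2 : ∀ k, blk (P * (ℓ 0 0 • diagE2 C2 - ℓ 0 1 • diagE1 C1)) 2 k = 0 :=
    blk_eq_zero_of_mul_isUnit hQ fun k => by
      rw [h.mul_sub_mul_eq_det_smul_Rmat2]; fin_cases k <;> simp [Rmat2]
  intro i hi
  fin_cases i
  · exact absurd rfl hi
  · have h0 : ℓ 1 0 = 0 ∨ blk P 1 0 = 0 := by
      simpa [blk_mul, Fin.sum_univ_four, diagE1, diagE2,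
        h.isUnit_C1.mul_left_eq_zero, h.isUnit_C2.mul_left_eq_zero] using hZ1 1
    have h1 : ℓ 1 1 = 0 ∨ blk P 1 0 = 0 := by
      simpa [blk_mul, Fin.sum_univ_four, diagE1, diagE2,
        h.isUnit_C1.mul_left_eq_zero, h.isUnit_C2.mul_left_eq_zero] using hZ1 0
    have := Matrix.fin_two_row_ne_zero_of_isUnit h.isUnit_ℓ 1
    tauto
  · have h0 : ℓ 0 0 = 0 ∨ blk P 2 0 = 0 := by
      simpa [blk_mul, Fin.sum_univ_four, diagE1, diagE2,
        h.isUnit_C1.mul_left_eq_zero, h.isUnit_C2.mul_left_eq_zero] using hZ2 1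
    have h1 : ℓ 0 1 = 0 ∨ blk P 2 0 = 0 := by
      simpa [blk_mul, Fin.sum_univ_four, diagE1, diagE2,
        h.isUnit_C1.mul_left_eq_zero, h.isUnit_C2.mul_left_eq_zero] using hZ2 0
    have := Matrix.fin_two_row_ne_zero_of_isUnit h.isUnit_ℓ 0
    tauto
  · exact h.P_row_zero 0 (by decide)

lemma isUnit_Q32 (h : FactorPair C1 C2 b1 b2 ℓ P Q) : IsUnit (blk Q 3 2) :=
  isUnit_blk_of_col h.isUnit_Q h.Q_col_zero

lemma isUnit_P00 (h : FactorPair C1 C2 b1 b2 ℓ P Q) : IsUnit (blk P 0 0) :=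
  isUnit_blk_of_col h.isUnit_P h.P_col_zero

lemma P33_mem_unitaryGroup (h : FactorPair C1 C2 b1 b2 ℓ P Q) :
    blk P 3 3 ∈ Matrix.unitaryGroup (Fin s) ℂ :=
  blk_mem_unitaryGroup_of_row h.mul_conjTranspose_P h.P_row_zero rfl

lemma Q03_mem_unitaryGroup (h : FactorPair C1 C2 b1 b2 ℓ P Q) :
    blk Q 0 3 ∈ Matrix.unitaryGroup (Fin s) ℂ :=
  blk_mem_unitaryGroup_of_row h.mul_conjTranspose_Q h.Q_row_zero rfl

lemma P_col3_eq (h : FactorPair C1 C2 b1 b2 ℓ P Q) :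
    blk P 0 3 = 0 ∧ blk P 1 3 = b2 • (C2 * blk P 3 3) ∧ blk P 2 3 = b1 • (C1 * blk P 3 3) := by
  have hcol := blk_eq_mul_of_row h.mul_conjTranspose_P h.P_row_zero rfl
  exact ⟨by simpa [scrL1] using hcol 0, by simpa [scrL1] using hcol 1,
    by simpa [scrL1] using hcol 2⟩

lemma Q_col3_eq (h : FactorPair C1 C2 b1 b2 ℓ P Q) :
    blk Q 3 3 = 0 ∧ blk Q 1 3 = (starRingEnd ℂ) b1 • (C1ᴴ * blk Q 0 3) ∧
      blk Q 2 3 = (starRingEnd ℂ) b2 • (C2ᴴ * blk Q 0 3) := by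
  have hcol := blk_eq_mul_of_row h.mul_conjTranspose_Q h.Q_row_zero rfl
  exact ⟨by simpa [scrL1] using hcol 3, by simpa [scrL1] using hcol 1,
    by simpa [scrL1] using hcol 2⟩

lemma P12_eq (h : FactorPair C1 C2 b1 b2 ℓ P Q) :
    blk P 1 2 = ℓ 1 0 • (C2 * ((blk Q 3 2)ᴴ)⁻¹ * C1⁻¹) := by
  have hY : blk P 1 2 * C1 * (blk Q 3 2)ᴴ = ℓ 1 0 • C2 := by
    simpa [blk_mul_diagE1_mul, h.P_col_zero 1 (by decide), Rmat1, Rmat2] using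
      (congrArg (blk · 1 3) h.Y1_eq).symm
  exact Matrix.eq_smul_mul_inv_mul_inv h.isUnit_C1 h.isUnit_Q32.star hY

lemma P11_eq (h : FactorPair C1 C2 b1 b2 ℓ P Q) :
    blk P 1 1 = ℓ 1 1 • (C2 * ((blk Q 3 2)ᴴ)⁻¹ * C2⁻¹) := by
  have hY : blk P 1 1 * C2 * (blk Q 3 2)ᴴ = ℓ 1 1 • C2 := by
    simpa [blk_mul_diagE2_mul, h.P_col_zero 1 (by decide), Rmat1, Rmat2] using
      (congrArg (blk · 1 3) h.Y2_eq).symm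
  exact Matrix.eq_smul_mul_inv_mul_inv h.isUnit_C2 h.isUnit_Q32.star hY

lemma P22_eq (h : FactorPair C1 C2 b1 b2 ℓ P Q) :
    blk P 2 2 = ℓ 0 0 • (C1 * ((blk Q 3 2)ᴴ)⁻¹ * C1⁻¹) := by
  have hY : blk P 2 2 * C1 * (blk Q 3 2)ᴴ = ℓ 0 0 • C1 := by
    simpa [blk_mul_diagE1_mul, h.P_col_zero 2 (by decide), Rmat1, Rmat2] using
      (congrArg (blk · 2 3) h.Y1_eq).symm
  exact Matrix.eq_smul_mul_inv_mul_inv h.isUnit_C1 h.isUnit_Q32.star hY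

lemma P21_eq (h : FactorPair C1 C2 b1 b2 ℓ P Q) :
    blk P 2 1 = ℓ 0 1 • (C1 * ((blk Q 3 2)ᴴ)⁻¹ * C2⁻¹) := by
  have hY : blk P 2 1 * C2 * (blk Q 3 2)ᴴ = ℓ 0 1 • C1 := by
    simpa [blk_mul_diagE2_mul, h.P_col_zero 2 (by decide), Rmat1, Rmat2] using
      (congrArg (blk · 2 3) h.Y2_eq).symm
  exact Matrix.eq_smul_mul_inv_mul_inv h.isUnit_C2 h.isUnit_Q32.star hY

lemma Q10_eq (h : FactorPair C1 C2 b1 b2 ℓ P Q) :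
    blk Q 1 0 = (starRingEnd ℂ) (ℓ 0 0) • (C1ᴴ * ((blk P 0 0)ᴴ)⁻¹ * (C1ᴴ)⁻¹) := by
  have hY : blk P 0 0 * C1 * (blk Q 1 0)ᴴ = ℓ 0 0 • C1 := by
    simpa [blk_mul_diagE1_mul, h.Q_col_zero 1 (by decide), Rmat1, Rmat2] using
      (congrArg (blk · 0 1) h.Y1_eq).symm
  exact Matrix.eq_star_smul_of_mul_mul_conjTranspose h.isUnit_P00 h.isUnit_C1 hY

lemma Q20_eq (h : FactorPair C1 C2 b1 b2 ℓ P Q) :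
    blk Q 2 0 = (starRingEnd ℂ) (ℓ 1 0) • (C2ᴴ * ((blk P 0 0)ᴴ)⁻¹ * (C1ᴴ)⁻¹) := by
  have hY : blk P 0 0 * C1 * (blk Q 2 0)ᴴ = ℓ 1 0 • C2 := by
    simpa [blk_mul_diagE1_mul, h.Q_col_zero 2 (by decide), Rmat1, Rmat2] using
      (congrArg (blk · 0 2) h.Y1_eq).symm
  exact Matrix.eq_star_smul_of_mul_mul_conjTranspose h.isUnit_P00 h.isUnit_C1 hY

lemma Q11_eq (h : FactorPair C1 C2 b1 b2 ℓ P Q) :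
    blk Q 1 1 = (starRingEnd ℂ) (ℓ 0 1) • (C1ᴴ * ((blk P 0 0)ᴴ)⁻¹ * (C2ᴴ)⁻¹) := by
  have hY : blk P 0 0 * C2 * (blk Q 1 1)ᴴ = ℓ 0 1 • C1 := by
    simpa [blk_mul_diagE2_mul, h.Q_col_zero 1 (by decide), Rmat1, Rmat2] using
      (congrArg (blk · 0 1) h.Y2_eq).symm
  exact Matrix.eq_star_smul_of_mul_mul_conjTranspose h.isUnit_P00 h.isUnit_C2 hY

lemma Q21_eq (h : FactorPair C1 C2 b1 b2 ℓ P Q) :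
    blk Q 2 1 = (starRingEnd ℂ) (ℓ 1 1) • (C2ᴴ * ((blk P 0 0)ᴴ)⁻¹ * (C2ᴴ)⁻¹) := by
  have hY : blk P 0 0 * C2 * (blk Q 2 1)ᴴ = ℓ 1 1 • C2 := by
    simpa [blk_mul_diagE2_mul, h.Q_col_zero 2 (by decide), Rmat1, Rmat2] using
      (congrArg (blk · 0 2) h.Y2_eq).symm
  exact Matrix.eq_star_smul_of_mul_mul_conjTranspose h.isUnit_P00 h.isUnit_C2 hY

end FactorPair

end Factorization

theorem blocks_of_P_and_Q_general {s : ℕ}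
    (C1 C2 : Matrix (Fin s) (Fin s) ℂ) (hinv1 : IsUnit C1) (hinv2 : IsUnit C2)
    (b1 b2 : ℂ) (hB0 : (scrL1 C1 C2 b1 b2).PosDef)
    (ℓ : Matrix (Fin 2) (Fin 2) ℂ) (hℓ : IsUnit ℓ)
    (P Q : Matrix (Fin 4 × Fin s) (Fin 4 × Fin s) ℂ)
    (hP : P * Pᴴ = scrL1 C1 C2 b1 b2) (hQ : Q * Qᴴ = scrL1 C1 C2 b1 b2)
    (hY1 : ℓ 0 0 • Rmat1 C1 + ℓ 1 0 • Rmat2 C2 =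
      P * blockMat ![![C1, 0, 0, 0], ![0, 0, 0, 0], ![0, 0, C1, 0], ![0, 0, 0, 0]] * Qᴴ)
    (hY2 : ℓ 0 1 • Rmat1 C1 + ℓ 1 1 • Rmat2 C2 =
      P * blockMat ![![0, C2, 0, 0], ![0, 0, C2, 0], ![0, 0, 0, 0], ![0, 0, 0, 0]] * Qᴴ) :
    blk Q 0 3 ∈ Matrix.unitaryGroup (Fin s) ℂ ∧
    blk P 3 3 ∈ Matrix.unitaryGroup (Fin s) ℂ ∧
    IsUnit (blk Q 3 2) ∧ IsUnit (blk P 0 0) ∧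
    blk P 0 3 = 0 ∧ blk P 1 0 = 0 ∧ blk P 2 0 = 0 ∧
    blk P 3 0 = 0 ∧ blk P 3 1 = 0 ∧ blk P 3 2 = 0 ∧
    blk P 1 1 = ℓ 1 1 • (C2 * ((blk Q 3 2)ᴴ)⁻¹ * C2⁻¹) ∧
    blk P 1 2 = ℓ 1 0 • (C2 * ((blk Q 3 2)ᴴ)⁻¹ * C1⁻¹) ∧
    blk P 1 3 = b2 • (C2 * blk P 3 3) ∧
    blk P 2 1 = ℓ 0 1 • (C1 * ((blk Q 3 2)ᴴ)⁻¹ * C2⁻¹) ∧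
    blk P 2 2 = ℓ 0 0 • (C1 * ((blk Q 3 2)ᴴ)⁻¹ * C1⁻¹) ∧
    blk P 2 3 = b1 • (C1 * blk P 3 3) ∧
    blk Q 0 0 = 0 ∧ blk Q 0 1 = 0 ∧ blk Q 0 2 = 0 ∧
    blk Q 1 2 = 0 ∧ blk Q 2 2 = 0 ∧ blk Q 3 3 = 0 ∧
    blk Q 1 0 = (starRingEnd ℂ) (ℓ 0 0) • (C1ᴴ * ((blk P 0 0)ᴴ)⁻¹ * (C1ᴴ)⁻¹) ∧
    blk Q 1 1 = (starRingEnd ℂ) (ℓ 0 1) • (C1ᴴ * ((blk P 0 0)ᴴ)⁻¹ * (C2ᴴ)⁻¹) ∧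
    blk Q 1 3 = (starRingEnd ℂ) b1 • (C1ᴴ * blk Q 0 3) ∧
    blk Q 2 0 = (starRingEnd ℂ) (ℓ 1 0) • (C2ᴴ * ((blk P 0 0)ᴴ)⁻¹ * (C1ᴴ)⁻¹) ∧
    blk Q 2 1 = (starRingEnd ℂ) (ℓ 1 1) • (C2ᴴ * ((blk P 0 0)ᴴ)⁻¹ * (C2ᴴ)⁻¹) ∧
    blk Q 2 3 = (starRingEnd ℂ) b2 • (C2ᴴ * blk Q 0 3) := by
  have h : FactorPair C1 C2 b1 b2 ℓ P Q :=
    { isUnit_C1 := hinv1, isUnit_C2 := hinv2, isUnit_ℓ := hℓ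
      isUnit_P := Matrix.isUnit_of_posDef_mul_conjTranspose (hP ▸ hB0)
      isUnit_Q := Matrix.isUnit_of_posDef_mul_conjTranspose (hQ ▸ hB0)
      mul_conjTranspose_P := hP, mul_conjTranspose_Q := hQ, Y1_eq := hY1, Y2_eq := hY2 }
  obtain ⟨hP03, hP13, hP23⟩ := h.P_col3_eq
  obtain ⟨hQ33, hQ13, hQ23⟩ := h.Q_col3_eq
  exact ⟨h.Q03_mem_unitaryGroup, h.P33_mem_unitaryGroup, h.isUnit_Q32, h.isUnit_P00, hP03,
    h.P_col_zero 1 (by decide), h.P_col_zero 2 (by decide),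
    h.P_row_zero 0 (by decide), h.P_row_zero 1 (by decide), h.P_row_zero 2 (by decide),
    h.P11_eq, h.P12_eq, hP13, h.P21_eq, h.P22_eq, hP23,
    h.Q_row_zero 0 (by decide), h.Q_row_zero 1 (by decide), h.Q_row_zero 2 (by decide),
    h.Q_col_zero 1 (by decide), h.Q_col_zero 2 (by decide), hQ33,
    h.Q10_eq, h.Q11_eq, hQ13, h.Q20_eq, h.Q21_eq, hQ23⟩

/-- Lemma 3.3: the block structure of the matrices `P` and `Q`. -/
theorem blocks_of_P_and_Q {s : ℕ} (hs : 0 < s)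
    (C1 C2 : Matrix (Fin s) (Fin s) ℂ) (hinv1 : IsUnit C1) (hinv2 : IsUnit C2)
    (b1 b2 : ℂ) (hB0 : (scrL1 C1 C2 b1 b2).PosDef)
    (ℓ : Matrix (Fin 2) (Fin 2) ℂ) (hℓ : IsUnit ℓ)
    (P Q : Matrix (Fin 4 × Fin s) (Fin 4 × Fin s) ℂ)
    (hP : P * Pᴴ = scrL1 C1 C2 b1 b2) (hQ : Q * Qᴴ = scrL1 C1 C2 b1 b2)
    (hY1 : ℓ 0 0 • Rmat1 C1 + ℓ 1 0 • Rmat2 C2 =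
      P * blockMat ![![C1, 0, 0, 0], ![0, 0, 0, 0], ![0, 0, C1, 0], ![0, 0, 0, 0]] * Qᴴ)
    (hY2 : ℓ 0 1 • Rmat1 C1 + ℓ 1 1 • Rmat2 C2 =
      P * blockMat ![![0, C2, 0, 0], ![0, 0, C2, 0], ![0, 0, 0, 0], ![0, 0, 0, 0]] * Qᴴ) :
    blk Q 0 3 ∈ Matrix.unitaryGroup (Fin s) ℂ ∧
    blk P 3 3 ∈ Matrix.unitaryGroup (Fin s) ℂ ∧
    IsUnit (blk Q 3 2) ∧ IsUnit (blk P 0 0) ∧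
    blk P 0 3 = 0 ∧ blk P 1 0 = 0 ∧ blk P 2 0 = 0 ∧
    blk P 3 0 = 0 ∧ blk P 3 1 = 0 ∧ blk P 3 2 = 0 ∧
    blk P 1 1 = ℓ 1 1 • (C2 * ((blk Q 3 2)ᴴ)⁻¹ * C2⁻¹) ∧
    blk P 1 2 = ℓ 1 0 • (C2 * ((blk Q 3 2)ᴴ)⁻¹ * C1⁻¹) ∧
    blk P 1 3 = b2 • (C2 * blk P 3 3) ∧
    blk P 2 1 = ℓ 0 1 • (C1 * ((blk Q 3 2)ᴴ)⁻¹ * C2⁻¹) ∧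
    blk P 2 2 = ℓ 0 0 • (C1 * ((blk Q 3 2)ᴴ)⁻¹ * C1⁻¹) ∧
    blk P 2 3 = b1 • (C1 * blk P 3 3) ∧
    blk Q 0 0 = 0 ∧ blk Q 0 1 = 0 ∧ blk Q 0 2 = 0 ∧
    blk Q 1 2 = 0 ∧ blk Q 2 2 = 0 ∧ blk Q 3 3 = 0 ∧
    blk Q 1 0 = (starRingEnd ℂ) (ℓ 0 0) • (C1ᴴ * ((blk P 0 0)ᴴ)⁻¹ * (C1ᴴ)⁻¹) ∧
    blk Q 1 1 = (starRingEnd ℂ) (ℓ 0 1) • (C1ᴴ * ((blk P 0 0)ᴴ)⁻¹ * (C2ᴴ)⁻¹) ∧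
    blk Q 1 3 = (starRingEnd ℂ) b1 • (C1ᴴ * blk Q 0 3) ∧
    blk Q 2 0 = (starRingEnd ℂ) (ℓ 1 0) • (C2ᴴ * ((blk P 0 0)ᴴ)⁻¹ * (C1ᴴ)⁻¹) ∧
    blk Q 2 1 = (starRingEnd ℂ) (ℓ 1 1) • (C2ᴴ * ((blk P 0 0)ᴴ)⁻¹ * (C2ᴴ)⁻¹) ∧
    blk Q 2 3 = (starRingEnd ℂ) b2 • (C2ᴴ * blk Q 0 3) :=
  blocks_of_P_and_Q_general C1 C2 hinv1 hinv2 b1 b2 hB0 ℓ hℓ P Q hP hQ hY1 hY2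
end
end

section
/- Let s > 1, let C₁, C₂ ∈ M_s(ℂ) be invertible matrices such that the star subalgebra of M_s(ℂ) generated by {C₁*C₁, C₂*C₂} equals M_s(ℂ), let 𝔏 = (ℓ_{j,k}) ∈ M₂(ℂ) be invertible, and let b = (b₁,b₂) ∈ ℂ². Suppose −(ℓ_{1,1}·conj(ℓ_{1,2})·C₂^{−1}(C₂*)^{−1} + ℓ_{2,1}·conj(ℓ_{2,2})·C₁^{−1}(C₁*)^{−1}) = (ℓ_{1,1}b₂ − ℓ_{2,1}b₁)·conj(−ℓ_{1,2}b₂ + ℓ_{2,2}b₁)·I_s. Then b₁·conj(b₂) = 0, and either ℓ_{1,2} = 0 = ℓ_{2,1} or ℓ_{1,1} = 0 = ℓ_{2,2}. -/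
/-! The self-adjoint matrices `X = C₁ᴴ C₁` and `Y = C₂ᴴ C₂` do not commute: otherwise the star
algebra they generate, which is all of `M_s(ℂ)`, would be commutative, impossible for `s > 1`.
Hence `X⁻¹ = C₁⁻¹ (C₁ᴴ)⁻¹` and `Y⁻¹` do not commute either, so a relation `a X⁻¹ + b Y⁻¹ = c • 1`
forces `a = b = c = 0` (if `a ≠ 0`, then `X⁻¹` is an affine function of `Y⁻¹`). The three resulting
scalar equations, together with `det 𝔏 ≠ 0`, give the dichotomy. -/

open scoped ComplexOrder Kronecker Matrix Matrix.Norms.L2Operator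

noncomputable section

theorem StarAlgebra.commute_of_adjoin_pair_eq_top {R A : Type*} [CommSemiring R] [StarRing R]
    [Semiring A] [StarRing A] [Algebra R A] [StarModule R A] {x y : A}
    (hx : IsSelfAdjoint x) (hy : IsSelfAdjoint y) (hxy : Commute x y)
    (htop : adjoin R {x, y} = ⊤) (a b : A) : Commute a b := by
  have hcomm : ∀ u ∈ ({x, y} : Set A), ∀ v ∈ ({x, y} : Set A), Commute u v := by
    rintro u (rfl | rfl) v (rfl | rfl)
    exacts [.refl _, hxy, hxy.symm, .refl _]
  have hsa : ∀ v ∈ ({x, y} : Set A), star v = v := by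
    rintro v (rfl | rfl)
    exacts [hx.star_eq, hy.star_eq]
  have := isMulCommutative_adjoin R hcomm fun u hu v hv => by
    rw [hsa v hv]; exact hcomm u hu v hv
  rw [htop, isMulCommutative_iff_of_setLike] at this
  exact this a trivial b trivial

theorem Matrix.exists_not_commute {n R : Type*} [Fintype n] [DecidableEq n] [Nontrivial n]
    [Semiring R] [Nontrivial R] : ∃ a b : Matrix n n R, ¬ Commute a b := by
  obtain ⟨i, j, hij⟩ := exists_pair_ne n
  refine ⟨single i j 1, single j i 1, fun h => ?_⟩
  simpa [hij] using congr_fun (congr_fun h.eq i) i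

theorem Matrix.commute_nonsing_inv_iff {n R : Type*} [Fintype n] [DecidableEq n] [CommRing R]
    {A B : Matrix n n R} (hA : IsUnit A) (hB : IsUnit B) :
    Commute A⁻¹ B⁻¹ ↔ Commute A B := by
  simp only [nonsing_inv_eq_ringInverse]
  refine ⟨fun h => ?_, Commute.ringInverse_ringInverse⟩
  simpa only [Ring.inverse_inverse hA, Ring.inverse_inverse hB] using h.ringInverse_ringInverse

theorem Commute.of_smul_add_smul_eq_algebraMap {K A : Type*} [Field K] [Ring A] [Algebra K A]
    {a b c : K} {u v : A} (ha : a ≠ 0) (h : a • u + b • v = algebraMap K A c) :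
    Commute u v := by
  have hu : u = a⁻¹ • (algebraMap K A c - b • v) := by
    rw [← h, add_sub_cancel_right, inv_smul_smul₀ ha]
  rw [hu]
  exact ((Algebra.commute_algebraMap_left c v).sub_left ((Commute.refl v).smul_left b)).smul_left _

theorem eq_zero_of_smul_add_smul_eq_algebraMap {K A : Type*} [Field K] [Ring A] [Nontrivial A]
    [Algebra K A] {a b c : K} {u v : A} (huv : ¬ Commute u v)
    (h : a • u + b • v = algebraMap K A c) : a = 0 ∧ b = 0 ∧ c = 0 := by
  have ha : a = 0 := by_contra fun ha => huv (.of_smul_add_smul_eq_algebraMap ha h)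
  have hb : b = 0 := by_contra fun hb =>
    huv (Commute.of_smul_add_smul_eq_algebraMap hb (by rwa [add_comm])).symm
  refine ⟨ha, hb, (algebraMap K A).injective ?_⟩
  rw [← h, ha, hb, zero_smul, zero_smul, add_zero, map_zero]

theorem Matrix.fin_two_dichotomy {K : Type*} [Field K] [StarRing K] (ℓ : Matrix (Fin 2) (Fin 2) K)
    (hℓ : ℓ.det ≠ 0) (b1 b2 : K) (h0 : ℓ 0 0 * starRingEnd K (ℓ 0 1) = 0)
    (h1 : ℓ 1 0 * starRingEnd K (ℓ 1 1) = 0)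
    (hb : (ℓ 0 0 * b2 - ℓ 1 0 * b1) * starRingEnd K (-(ℓ 0 1 * b2) + ℓ 1 1 * b1) = 0) :
    b1 * starRingEnd K b2 = 0 ∧ ((ℓ 0 1 = 0 ∧ ℓ 1 0 = 0) ∨ (ℓ 0 0 = 0 ∧ ℓ 1 1 = 0)) := by
  rw [det_fin_two] at hℓ
  simp only [mul_eq_zero, map_eq_zero] at h0 h1
  rcases h0 with h00 | h01 <;> rcases h1 with h10 | h11
  · exact absurd (by rw [h00, h10]; ring) hℓ
  · have h10 : ℓ 1 0 ≠ 0 := fun h => hℓ (by rw [h00, h11, h]; ring)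
    have h01 : ℓ 0 1 ≠ 0 := fun h => hℓ (by rw [h00, h11, h]; ring)
    refine ⟨?_, .inr ⟨h00, h11⟩⟩
    simpa [h00, h11, h10, h01] using hb
  · have h00 : ℓ 0 0 ≠ 0 := fun h => hℓ (by rw [h01, h10, h]; ring)
    have h11 : ℓ 1 1 ≠ 0 := fun h => hℓ (by rw [h01, h10, h]; ring)
    refine ⟨?_, .inl ⟨h01, h10⟩⟩
    simpa [h01, h10, h00, h11, or_comm] using hb
  · exact absurd (by rw [h01, h11]; ring) hℓ

/-- Lemma 3.4 (the dichotomy): if `s > 1` and equation (3.5) holds, then `b₁ b₂* = 0` and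
either the off-diagonal or the diagonal entries of `𝔏` vanish. -/
theorem dichotomy {s : ℕ} (hs : 1 < s)
    (C1 C2 : Matrix (Fin s) (Fin s) ℂ) (hinv1 : IsUnit C1) (hinv2 : IsUnit C2)
    (hgen1 : StarAlgebra.adjoin ℂ ({C1ᴴ * C1, C2ᴴ * C2} : Set (Matrix (Fin s) (Fin s) ℂ)) = ⊤)
    (ℓ : Matrix (Fin 2) (Fin 2) ℂ) (hℓ : IsUnit ℓ) (b1 b2 : ℂ)
    (heq : -((ℓ 0 0 * (starRingEnd ℂ) (ℓ 0 1)) • (C2⁻¹ * (C2ᴴ)⁻¹) +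
          (ℓ 1 0 * (starRingEnd ℂ) (ℓ 1 1)) • (C1⁻¹ * (C1ᴴ)⁻¹)) =
        ((ℓ 0 0 * b2 - ℓ 1 0 * b1) * (starRingEnd ℂ) (-(ℓ 0 1 * b2) + ℓ 1 1 * b1)) •
          (1 : Matrix (Fin s) (Fin s) ℂ)) :
    b1 * (starRingEnd ℂ) b2 = 0 ∧
      ((ℓ 0 1 = 0 ∧ ℓ 1 0 = 0) ∨ (ℓ 0 0 = 0 ∧ ℓ 1 1 = 0)) := by
  have : Nontrivial (Fin s) := Fin.nontrivial_iff_two_le.mpr hs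
  have hX : IsUnit (C1ᴴ * C1) := (C1.isUnit_conjTranspose.2 hinv1).mul hinv1
  have hY : IsUnit (C2ᴴ * C2) := (C2.isUnit_conjTranspose.2 hinv2).mul hinv2
  have hnc : ¬ Commute (C2ᴴ * C2)⁻¹ (C1ᴴ * C1)⁻¹ := by
    rw [Matrix.commute_nonsing_inv_iff hY hX]
    intro h
    obtain ⟨a, b, hab⟩ := Matrix.exists_not_commute (n := Fin s) (R := ℂ)
    exact hab (StarAlgebra.commute_of_adjoin_pair_eq_top (.star_mul_self C1)
      (.star_mul_self C2) h.symm hgen1 a b)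
  rw [Matrix.mul_inv_rev, Matrix.mul_inv_rev] at hnc
  rw [neg_eq_iff_eq_neg, ← neg_smul, ← Algebra.algebraMap_eq_smul_one] at heq
  obtain ⟨h0, h1, hb⟩ := eq_zero_of_smul_add_smul_eq_algebraMap hnc heq
  exact Matrix.fin_two_dichotomy ℓ ((Matrix.isUnit_iff_isUnit_det ℓ).mp hℓ).ne_zero b1 b2 h0 h1
    (neg_eq_zero.mp hb)
end
end

section
/- Suppose s = 1 and C₁, C₂ are complex numbers of modulus 1. For every (z₁,z₂) ∈ ℂ², the 4×4 matrix ℒ(z₁,z₂) is positive definite if and only if |z₁| + |z₂| < 1; equivalently, 𝔓[1] = {(z₁,z₂) ∈ ℂ² : |z₁| + |z₂| < 1}. -/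
open scoped ComplexOrder Kronecker Matrix Matrix.Norms.L2Operator

noncomputable section

/-! Up to reindexing, `ℒ(z₁, z₂)` at level one is the scalar `4 × 4` matrix `scalarPencil y₁ y₂`
with `yⱼ = zⱼ cⱼ`, so `|yⱼ| = |zⱼ|`. Its quadratic form is `‖x‖²` plus four cross terms
`2 Re (x̄ₖ y xₗ)`, one per edge of the square `0 – 1 – 3 – 2 – 0`, and each is at least
`-|y| (|xₖ|² + |xₗ|²)`. Every vertex lies on one `y₁`-edge and one `y₂`-edge, so the form is at
least `(1 - |y₁| - |y₂|) ‖x‖²`. Conversely, choosing unimodular `uⱼ` with `yⱼ uⱼ = -|yⱼ|`, the vector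
`(1, u₁, u₂, u₁ u₂)` makes every cross term negative and the form equal to
`4 (1 - |y₁| - |y₂|)`. -/

open ComplexConjugate

theorem Matrix.posDef_submatrix_equiv_s17 {m n R : Type*} [Ring R] [PartialOrder R] [StarRing R]
    {M : Matrix n n R} (e : m ≃ n) : (M.submatrix e e).PosDef ↔ M.PosDef :=
  ⟨fun h => by simpa using h.submatrix e.symm.injective, fun h => h.submatrix e.injective⟩

namespace Complex

theorem conj_mul_mul_add_conj_mul_conj_mul (a w b : ℂ) :
    conj a * (w * b) + conj b * (conj w * a) = ((2 * (conj a * w * b).re : ℝ) : ℂ) := by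
  rw [← add_conj]
  simp only [map_mul, conj_conj]
  ring

theorem neg_norm_mul_sq_add_sq_le_two_mul_re (a w b : ℂ) :
    -(‖w‖ * (‖a‖ ^ 2 + ‖b‖ ^ 2)) ≤ 2 * (conj a * w * b).re := by
  have hre : -(‖a‖ * ‖w‖ * ‖b‖) ≤ (conj a * w * b).re := by
    simpa [norm_mul] using neg_le_of_abs_le (abs_re_le_norm (conj a * w * b))
  nlinarith [mul_nonneg (norm_nonneg w) (sq_nonneg (‖a‖ - ‖b‖))]

theorem exists_norm_eq_one_mul_eq_neg_norm (y : ℂ) : ∃ u : ℂ, ‖u‖ = 1 ∧ y * u = -‖y‖ := by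
  refine ⟨-exp (↑(-arg y) * I), by rw [norm_neg, norm_exp_ofReal_mul_I], ?_⟩
  calc y * -exp (↑(-arg y) * I) = -(‖y‖ * exp (arg y * I) * exp (↑(-arg y) * I)) := by
        rw [norm_mul_exp_arg_mul_I]; ring
    _ = -‖y‖ := by rw [mul_assoc, ← exp_add]; push_cast; simp

end Complex

open Complex

def scalarPencil (y1 y2 : ℂ) : Matrix (Fin 4) (Fin 4) ℂ :=
  !![1, y1, y2, 0;
     conj y1, 1, 0, y2;
     conj y2, 0, 1, y1;
     0, conj y2, conj y1, 1]

theorem scalarPencil_isHermitian (y1 y2 : ℂ) : (scalarPencil y1 y2).IsHermitian := by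
  ext i j
  fin_cases i <;> fin_cases j <;> simp [scalarPencil, Matrix.conjTranspose_apply]

theorem dotProduct_scalarPencil_mulVec (y1 y2 : ℂ) (x : Fin 4 → ℂ) :
    star x ⬝ᵥ (scalarPencil y1 y2 *ᵥ x) =
      ((∑ i, ‖x i‖ ^ 2 + 2 * (conj (x 0) * y1 * x 1).re + 2 * (conj (x 0) * y2 * x 2).re
        + 2 * (conj (x 1) * y2 * x 3).re + 2 * (conj (x 2) * y1 * x 3).re : ℝ) : ℂ) := by
  have e1 := conj_mul_mul_add_conj_mul_conj_mul (x 0) y1 (x 1)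
  have e2 := conj_mul_mul_add_conj_mul_conj_mul (x 0) y2 (x 2)
  have e3 := conj_mul_mul_add_conj_mul_conj_mul (x 1) y2 (x 3)
  have e4 := conj_mul_mul_add_conj_mul_conj_mul (x 2) y1 (x 3)
  simp only [scalarPencil, dotProduct, Matrix.mulVec, Fin.sum_univ_four, Pi.star_apply,
    Matrix.of_apply, Matrix.cons_val, RCLike.star_def]
  push_cast at e1 e2 e3 e4 ⊢
  simp only [← conj_mul']
  linear_combination e1 + e2 + e3 + e4

theorem scalarPencil_posDef_of_norm_add_norm_lt {y1 y2 : ℂ} (h : ‖y1‖ + ‖y2‖ < 1) :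
    (scalarPencil y1 y2).PosDef := by
  refine Matrix.PosDef.of_dotProduct_mulVec_pos (scalarPencil_isHermitian y1 y2) fun x hx => ?_
  have hsum : 0 < ∑ i, ‖x i‖ ^ 2 := by
    obtain ⟨i, hi⟩ := Function.ne_iff.mp hx
    exact Finset.sum_pos' (fun j _ => by positivity) ⟨i, Finset.mem_univ i, by positivity⟩
  have h01 := neg_norm_mul_sq_add_sq_le_two_mul_re (x 0) y1 (x 1)
  have h02 := neg_norm_mul_sq_add_sq_le_two_mul_re (x 0) y2 (x 2)
  have h13 := neg_norm_mul_sq_add_sq_le_two_mul_re (x 1) y2 (x 3)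
  have h23 := neg_norm_mul_sq_add_sq_le_two_mul_re (x 2) y1 (x 3)
  rw [dotProduct_scalarPencil_mulVec, zero_lt_real]
  rw [Fin.sum_univ_four] at hsum ⊢
  nlinarith

theorem norm_add_norm_lt_of_scalarPencil_posDef {y1 y2 : ℂ} (h : (scalarPencil y1 y2).PosDef) :
    ‖y1‖ + ‖y2‖ < 1 := by
  obtain ⟨u1, hu1, hyu1⟩ := exists_norm_eq_one_mul_eq_neg_norm y1
  obtain ⟨u2, hu2, hyu2⟩ := exists_norm_eq_one_mul_eq_neg_norm y2
  have hx : ![1, u1, u2, u1 * u2] ≠ 0 := fun h0 => by simpa using congrFun h0 0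
  have hpos := h.dotProduct_mulVec_pos hx
  have hu1' : conj u1 * u1 = 1 := by rw [conj_mul', hu1]; simp
  have hu2' : conj u2 * u2 = 1 := by rw [conj_mul', hu2]; simp
  have e13 : conj u1 * y2 * (u1 * u2) = -‖y2‖ := by linear_combination (y2 * u2) * hu1' + hyu2
  have e23 : conj u2 * y1 * (u1 * u2) = -‖y1‖ := by linear_combination (y1 * u1) * hu2' + hyu1
  rw [dotProduct_scalarPencil_mulVec, zero_lt_real] at hpos
  simp [Fin.sum_univ_four, hu1, hu2, hyu1, hyu2, e13, e23] at hpos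
  linarith

theorem scalarPencil_posDef_iff (y1 y2 : ℂ) :
    (scalarPencil y1 y2).PosDef ↔ ‖y1‖ + ‖y2‖ < 1 :=
  ⟨norm_add_norm_lt_of_scalarPencil_posDef, scalarPencil_posDef_of_norm_add_norm_lt⟩

theorem scrL1_eq_submatrix_scalarPencil (C1 C2 : Matrix (Fin 1) (Fin 1) ℂ) (z1 z2 : ℂ) :
    scrL1 C1 C2 z1 z2 = (scalarPencil (z1 * C1 0 0) (z2 * C2 0 0)).submatrix
      (Equiv.prodUnique (Fin 4) (Fin 1)) (Equiv.prodUnique (Fin 4) (Fin 1)) := by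
  ext ⟨i, a⟩ ⟨j, b⟩
  obtain rfl := Subsingleton.elim a 0
  obtain rfl := Subsingleton.elim b 0
  fin_cases i <;> fin_cases j <;>
    simp only [Fin.reduceFinMk, scrL1, blockMat, scalarPencil, Matrix.of_apply,
      Matrix.submatrix_apply, Equiv.prodUnique_apply, Matrix.cons_val] <;>
    simp [Matrix.conjTranspose_apply]

theorem scrL_eq_submatrix_scrL1 {s : ℕ} (C1 C2 : Matrix (Fin s) (Fin s) ℂ) {α : Type*}
    [DecidableEq α] [Unique α] (X : Matrix α α ℂ × Matrix α α ℂ) :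
    let e := (Equiv.refl (Fin 4)).prodCongr (Equiv.prodUnique (Fin s) α)
    scrL C1 C2 X = (scrL1 C1 C2 (X.1 default default) (X.2 default default)).submatrix e e := by
  ext ⟨i, a, a'⟩ ⟨j, b, b'⟩
  obtain rfl := Subsingleton.elim a' default
  obtain rfl := Subsingleton.elim b' default
  fin_cases i <;> fin_cases j <;>
    simp only [Fin.reduceFinMk, scrL, scrL1, blockMat, Matrix.of_apply, Matrix.submatrix_apply,
      Equiv.prodCongr_apply, Equiv.prodUnique_apply, Prod.map, Equiv.refl_apply,
      Matrix.cons_val] <;>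
    simp [Matrix.conjTranspose_apply, Matrix.kroneckerMap_apply, Matrix.one_apply, mul_comm]

/-- For `s = 1`, the level-one set `𝔓[1]` is the pseudo-ellipse
`{(z₁, z₂) : |z₁| + |z₂| < 1}`. -/
theorem P_level_one_is_pseudo_ellipse (c1 c2 : ℂ)
    (hc1 : ‖c1‖ = 1) (hc2 : ‖c2‖ = 1) :
    (∀ z1 z2 : ℂ,
      (scrL1 (c1 • (1 : Matrix (Fin 1) (Fin 1) ℂ)) (c2 • (1 : Matrix (Fin 1) (Fin 1) ℂ))
          z1 z2).PosDef ↔ ‖z1‖ + ‖z2‖ < 1) ∧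
    freeP (c1 • (1 : Matrix (Fin 1) (Fin 1) ℂ)) (c2 • (1 : Matrix (Fin 1) (Fin 1) ℂ)) 1 =
      {X : Mat 1 × Mat 1 | ‖X.1 0 0‖ + ‖X.2 0 0‖ < 1} := by
  have level_one (z1 z2 : ℂ) :
      (scrL1 (c1 • (1 : Matrix (Fin 1) (Fin 1) ℂ)) (c2 • (1 : Matrix (Fin 1) (Fin 1) ℂ))
        z1 z2).PosDef ↔ ‖z1‖ + ‖z2‖ < 1 := by
    rw [scrL1_eq_submatrix_scalarPencil, Matrix.posDef_submatrix_equiv_s17, scalarPencil_posDef_iff]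
    simp [hc1, hc2]
  refine ⟨level_one, Set.ext fun X => ?_⟩
  change (scrL _ _ X).PosDef ↔ _
  rw [scrL_eq_submatrix_scrL1, Matrix.posDef_submatrix_equiv_s17, level_one]
  rfl
end
end

section
/- Let G₁ be an a×b complex matrix and G₂ a b×c complex matrix, and let A₁, A₂ be the (a+b+c)×(a+b+c) block matrices A₁ = [[0,G₁,0],[0,0,0],[0,0,0]] and A₂ = [[0,0,0],[0,0,G₂],[0,0,0]]. If X = (X₁,X₂) ∈ D_A[n] and W₀, W₁, W₂ ∈ Mₙ(ℂ) are unitary, then (W₀*X₁W₁, W₁*X₂W₂) ∈ D_A[n]. -/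
/-! Conjugate the pencil by the block-diagonal unitary `U = (W₀ ⊕ W₁ ⊕ W₂)`, one block for each
summand of `ℂᵃ ⊕ ℂᵇ ⊕ ℂᶜ` (tensored with `ℂⁿ`). Since `A₁` maps the `b`-block to the `a`-block and
`A₂` maps the `c`-block to the `b`-block, `U* (A₁ ⊗ X₁) U = A₁ ⊗ W₀* X₁ W₁` and
`U* (A₂ ⊗ X₂) U = A₂ ⊗ W₁* X₂ W₂`. Hence `L_A(W₀* X₁ W₁, W₁* X₂ W₂) = U* L_A(X) U`, which is
positive definite together with `L_A(X)`. -/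

open scoped ComplexOrder Kronecker Matrix Matrix.Norms.L2Operator

noncomputable section

/-- The pencil `L_A(X)` of the hyper-Reinhardt free spectrahedron determined by `G₁, G₂`. -/
def hrL {a b c n : ℕ} (G1 : Matrix (Fin a) (Fin b) ℂ) (G2 : Matrix (Fin b) (Fin c) ℂ)
    (X : Mat n × Mat n) :
    Matrix (((Fin a ⊕ Fin b) ⊕ Fin c) × Fin n) (((Fin a ⊕ Fin b) ⊕ Fin c) × Fin n) ℂ :=
  let A1 : Matrix ((Fin a ⊕ Fin b) ⊕ Fin c) ((Fin a ⊕ Fin b) ⊕ Fin c) ℂ :=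
    Matrix.fromBlocks (Matrix.fromBlocks 0 G1 0 0) 0 0 0
  let A2 : Matrix ((Fin a ⊕ Fin b) ⊕ Fin c) ((Fin a ⊕ Fin b) ⊕ Fin c) ℂ :=
    Matrix.fromBlocks 0 (Matrix.fromRows 0 G2) 0 0
  1 + A1 ⊗ₖ X.1 + A2 ⊗ₖ X.2 + A1ᴴ ⊗ₖ X.1ᴴ + A2ᴴ ⊗ₖ X.2ᴴ

namespace Matrix

section KronBlockDiagonal

variable {ι m R : Type*} [DecidableEq ι]

/-- `blockDiagonal w` with the block index moved first, to match the indexing of `A ⊗ₖ Y`. -/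
def kronBlockDiagonal [Zero R] (w : ι → Matrix m m R) : Matrix (ι × m) (ι × m) R :=
  (blockDiagonal w).submatrix (Equiv.prodComm ι m) (Equiv.prodComm ι m)

theorem kronBlockDiagonal_apply [Zero R] (w : ι → Matrix m m R) (p q : ι × m) :
    kronBlockDiagonal w p q = if p.1 = q.1 then w p.1 p.2 q.2 else 0 := by
  simp [kronBlockDiagonal, blockDiagonal_apply]

theorem conjTranspose_kronBlockDiagonal [AddMonoid R] [StarAddMonoid R] (w : ι → Matrix m m R) :
    (kronBlockDiagonal w)ᴴ = kronBlockDiagonal fun i => (w i)ᴴ := by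
  rw [kronBlockDiagonal, kronBlockDiagonal, conjTranspose_submatrix, blockDiagonal_conjTranspose]

theorem kronBlockDiagonal_mem_unitaryGroup [Fintype ι] [Fintype m] [DecidableEq m] [CommRing R]
    [StarRing R] {w : ι → Matrix m m R} (hw : ∀ i, w i ∈ unitaryGroup m R) :
    kronBlockDiagonal w ∈ unitaryGroup (ι × m) R := by
  have hw' : (fun i => (w i)ᴴ * w i) = 1 := funext fun i => mem_unitaryGroup_iff'.1 (hw i)
  rw [mem_unitaryGroup_iff', star_eq_conjTranspose, conjTranspose_kronBlockDiagonal,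
    kronBlockDiagonal, kronBlockDiagonal, submatrix_mul_equiv, ← blockDiagonal_mul, hw',
    blockDiagonal_one, submatrix_one_equiv]

variable [Fintype ι] [Fintype m] [CommSemiring R] [StarRing R]

theorem conjTranspose_kronBlockDiagonal_mul_kronecker_mul (w : ι → Matrix m m R)
    (A : Matrix ι ι R) (Y : Matrix m m R) :
    (kronBlockDiagonal w)ᴴ * (A ⊗ₖ Y) * kronBlockDiagonal w =
      of fun p q => A p.1 q.1 * ((w p.1)ᴴ * Y * w q.1) p.2 q.2 := by
  ext ⟨i, p⟩ ⟨j, q⟩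
  simp only [conjTranspose_kronBlockDiagonal, mul_apply, Fintype.sum_prod_type,
    kronBlockDiagonal_apply, kronecker_apply, of_apply]
  simp [Finset.mul_sum, Finset.sum_mul, ite_mul, mul_ite, mul_assoc, mul_left_comm]

theorem conjTranspose_kronBlockDiagonal_mul_kronecker_mul_of_support {w : ι → Matrix m m R}
    {A : Matrix ι ι R} {V V' : Matrix m m R} (hA : ∀ i j, A i j ≠ 0 → w i = V ∧ w j = V')
    (Y : Matrix m m R) :
    (kronBlockDiagonal w)ᴴ * (A ⊗ₖ Y) * kronBlockDiagonal w = A ⊗ₖ (Vᴴ * Y * V') := by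
  rw [conjTranspose_kronBlockDiagonal_mul_kronecker_mul]
  ext ⟨i, p⟩ ⟨j, q⟩
  by_cases hij : A i j = 0
  · simp [hij]
  · obtain ⟨hi, hj⟩ := hA i j hij
    simp [hi, hj]

theorem conjTranspose_kronBlockDiagonal_mul_kronecker_conjTranspose_mul_of_support
    {w : ι → Matrix m m R} {A : Matrix ι ι R} {V V' : Matrix m m R}
    (hA : ∀ i j, A i j ≠ 0 → w i = V ∧ w j = V') (Y : Matrix m m R) :
    (kronBlockDiagonal w)ᴴ * (Aᴴ ⊗ₖ Yᴴ) * kronBlockDiagonal w = Aᴴ ⊗ₖ (Vᴴ * Y * V')ᴴ := by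
  have hA' : ∀ i j, Aᴴ i j ≠ 0 → w i = V' ∧ w j = V := fun i j h =>
    (hA j i (by simpa [conjTranspose_apply] using h)).symm
  rw [conjTranspose_kronBlockDiagonal_mul_kronecker_mul_of_support hA', conjTranspose_mul,
    conjTranspose_mul, conjTranspose_conjTranspose, mul_assoc]

end KronBlockDiagonal

end Matrix

open Matrix

namespace HyperReinhardt

variable {a b c n : ℕ}

/-- `A₁ = [[0, G₁, 0], [0, 0, 0], [0, 0, 0]]` -/
def A1 (G1 : Matrix (Fin a) (Fin b) ℂ) (c : ℕ) :
    Matrix ((Fin a ⊕ Fin b) ⊕ Fin c) ((Fin a ⊕ Fin b) ⊕ Fin c) ℂ :=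
  fromBlocks (fromBlocks 0 G1 0 0) 0 0 0

/-- `A₂ = [[0, 0, 0], [0, 0, G₂], [0, 0, 0]]` -/
def A2 (a : ℕ) (G2 : Matrix (Fin b) (Fin c) ℂ) :
    Matrix ((Fin a ⊕ Fin b) ⊕ Fin c) ((Fin a ⊕ Fin b) ⊕ Fin c) ℂ :=
  fromBlocks 0 (fromRows 0 G2) 0 0

theorem hrL_eq (G1 : Matrix (Fin a) (Fin b) ℂ) (G2 : Matrix (Fin b) (Fin c) ℂ)
    (X : Mat n × Mat n) :
    hrL G1 G2 X = 1 + A1 G1 c ⊗ₖ X.1 + A2 a G2 ⊗ₖ X.2 + (A1 G1 c)ᴴ ⊗ₖ X.1ᴴ +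
      (A2 a G2)ᴴ ⊗ₖ X.2ᴴ :=
  rfl

def weight (a b c : ℕ) (W0 W1 W2 : Mat n) : (Fin a ⊕ Fin b) ⊕ Fin c → Mat n :=
  Sum.elim (Sum.elim (fun _ => W0) fun _ => W1) fun _ => W2

theorem weight_mem_unitaryGroup {W0 W1 W2 : Mat n} (hW0 : W0 ∈ unitaryGroup (Fin n) ℂ)
    (hW1 : W1 ∈ unitaryGroup (Fin n) ℂ) (hW2 : W2 ∈ unitaryGroup (Fin n) ℂ) :
    ∀ i, weight a b c W0 W1 W2 i ∈ unitaryGroup (Fin n) ℂ := by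
  rintro ((i | i) | i) <;> assumption

theorem weight_eq_of_A1_apply_ne_zero (G1 : Matrix (Fin a) (Fin b) ℂ) (W0 W1 W2 : Mat n) (i j)
    (h : A1 G1 c i j ≠ 0) : weight a b c W0 W1 W2 i = W0 ∧ weight a b c W0 W1 W2 j = W1 := by
  rcases i with (i | i) | i <;> rcases j with (j | j) | j <;> simp_all [A1, weight]

theorem weight_eq_of_A2_apply_ne_zero (G2 : Matrix (Fin b) (Fin c) ℂ) (W0 W1 W2 : Mat n) (i j)
    (h : A2 a G2 i j ≠ 0) : weight a b c W0 W1 W2 i = W1 ∧ weight a b c W0 W1 W2 j = W2 := by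
  rcases i with (i | i) | i <;> rcases j with (j | j) | j <;> simp_all [A2, weight]

theorem hrL_twist_eq_conj (G1 : Matrix (Fin a) (Fin b) ℂ) (G2 : Matrix (Fin b) (Fin c) ℂ)
    (X : Mat n × Mat n) {W0 W1 W2 : Mat n} (hW0 : W0 ∈ unitaryGroup (Fin n) ℂ)
    (hW1 : W1 ∈ unitaryGroup (Fin n) ℂ) (hW2 : W2 ∈ unitaryGroup (Fin n) ℂ) :
    hrL G1 G2 (W0ᴴ * X.1 * W1, W1ᴴ * X.2 * W2) =
      star (kronBlockDiagonal (weight a b c W0 W1 W2)) * hrL G1 G2 X *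
        kronBlockDiagonal (weight a b c W0 W1 W2) := by
  have hU := mem_unitaryGroup_iff'.1
    (kronBlockDiagonal_mem_unitaryGroup (weight_mem_unitaryGroup (a := a) (b := b) (c := c)
      hW0 hW1 hW2))
  rw [star_eq_conjTranspose] at hU ⊢
  simp only [hrL_eq, Matrix.mul_add, Matrix.add_mul, Matrix.mul_one, hU,
    conjTranspose_kronBlockDiagonal_mul_kronecker_mul_of_support (weight_eq_of_A1_apply_ne_zero G1 W0 W1 W2),
    conjTranspose_kronBlockDiagonal_mul_kronecker_mul_of_support (weight_eq_of_A2_apply_ne_zero G2 W0 W1 W2),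
    conjTranspose_kronBlockDiagonal_mul_kronecker_conjTranspose_mul_of_support
      (weight_eq_of_A1_apply_ne_zero G1 W0 W1 W2),
    conjTranspose_kronBlockDiagonal_mul_kronecker_conjTranspose_mul_of_support
      (weight_eq_of_A2_apply_ne_zero G2 W0 W1 W2)]

end HyperReinhardt

/-- A hyper-Reinhardt free spectrahedron is invariant under the twisted unitary action
`X ↦ (W₀* X₁ W₁, W₁* X₂ W₂)`. -/
theorem hyperReinhardt_unitary_invariance {a b c : ℕ}
    (G1 : Matrix (Fin a) (Fin b) ℂ) (G2 : Matrix (Fin b) (Fin c) ℂ)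
    {n : ℕ} (X : Mat n × Mat n) (hX : (hrL G1 G2 X).PosDef)
    (W0 W1 W2 : Mat n)
    (hW0 : W0 ∈ Matrix.unitaryGroup (Fin n) ℂ)
    (hW1 : W1 ∈ Matrix.unitaryGroup (Fin n) ℂ)
    (hW2 : W2 ∈ Matrix.unitaryGroup (Fin n) ℂ) :
    (hrL G1 G2 (W0ᴴ * X.1 * W1, W1ᴴ * X.2 * W2)).PosDef := by
  have hU := kronBlockDiagonal_mem_unitaryGroup
    (HyperReinhardt.weight_mem_unitaryGroup (a := a) (b := b) (c := c) hW0 hW1 hW2)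
  rw [HyperReinhardt.hrL_twist_eq_conj G1 G2 X hW0 hW1 hW2]
  exact (IsUnit.posDef_star_left_conjugate_iff (Unitary.isUnit_coe (U := ⟨_, hU⟩))).2 hX
end
end
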